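/- arXiv:2503.03719 — 8 statements merged into one kernel-verified Lean document; each statement's English description precedes it below -/
import Mathlib

section
/- With c(p,q) defined by the T-max recursion and d_+(p,q), d_-(p,q) defined as the corresponding differences, one has c(p,q) = d_+(p,q) + ∑_{s=1}^{p} π_{d2−q, s}(p_{1,•}) · d_+(p−s, q), and symmetrically c(p,q) = d_-(p,q) + ∑_{s=1}^{q} π_{d1−p, s}(p_{2,•}) · d_-(p, q−s). -/
/-- Polynomial ring `ℤ[p_{1,•} ∪ p_{2,•}]` in two families of variables:
the variable `X (i, k)` is `p_{i+1, k}`. -/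
abbrev GreedyRing := MvPolynomial (Fin 2 × ℕ) ℤ

/-- The formal power series `1 + ∑_{k≥1} p_{i,k} x^k`. -/
noncomputable def Pser (i : Fin 2) : PowerSeries GreedyRing :=
  PowerSeries.mk fun k => if k = 0 then 1 else MvPolynomial.X (i, k)

/-- `π_{m,n}(p_{i,•})`: the coefficients of `(1 + ∑_{k≥1} p_{i,k} x^k)^m`. -/
noncomputable def piP (i : Fin 2) (m : ℤ) (n : ℕ) : GreedyRing :=
  if 0 ≤ m then PowerSeries.coeff n ((Pser i) ^ m.toNat)
  else if n = 0 then 1 else 0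

/-- `ς_{m,n}(p_{i,•})`: the coefficients of `(1 + ∑_{k≥1} p_{i,k} x^k)^{-m}`. -/
noncomputable def sigmaP (i : Fin 2) (m : ℤ) (n : ℕ) : GreedyRing :=
  if 0 ≤ m then PowerSeries.coeff n ((PowerSeries.invOfUnit (Pser i) 1) ^ m.toNat)
  else if n = 0 then 1 else 0

/-- Coefficientwise maximum of two integer polynomials: the coefficient of each monomial
in `Tmax f g` is the maximum of the corresponding coefficients of `f` and `g`. -/
noncomputable def Tmax (f g : GreedyRing) : GreedyRing :=
  ∑ e ∈ f.support ∪ g.support,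
    MvPolynomial.monomial e (max (MvPolynomial.coeff e f) (MvPolynomial.coeff e g))

lemma constCoeff_Pser (i : Fin 2) : PowerSeries.constantCoeff (Pser i) = 1 := by
  simp [Pser, ← PowerSeries.coeff_zero_eq_constantCoeff]

lemma mk_piP (i : Fin 2) (m : ℤ) (h : 0 ≤ m) :
    PowerSeries.mk (piP i m) = (Pser i) ^ m.toNat := by
  ext n; rw [PowerSeries.coeff_mk, piP, if_pos h]

lemma mk_sigmaP (i : Fin 2) (m : ℤ) (h : 0 ≤ m) :
    PowerSeries.mk (sigmaP i m) = (PowerSeries.invOfUnit (Pser i) 1) ^ m.toNat := by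
  ext n; rw [PowerSeries.coeff_mk, sigmaP, if_pos h]

lemma pi_sigma_mul (i : Fin 2) (m : ℤ) :
    PowerSeries.mk (piP i m) * PowerSeries.mk (sigmaP i m) = 1 := by
  by_cases h : 0 ≤ m
  · rw [mk_piP i m h, mk_sigmaP i m h, ← mul_pow,
      PowerSeries.mul_invOfUnit _ _ (by simp [constCoeff_Pser]), one_pow]
  · have h1 : PowerSeries.mk (piP i m) = 1 := by
      ext n; rw [PowerSeries.coeff_mk, piP, if_neg h, PowerSeries.coeff_one]
    have h2 : PowerSeries.mk (sigmaP i m) = 1 := by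
      ext n; rw [PowerSeries.coeff_mk, sigmaP, if_neg h, PowerSeries.coeff_one]
    rw [h1, h2, one_mul]

lemma piP_zero (i : Fin 2) (m : ℤ) : piP i m 0 = 1 := by
  unfold piP
  split_ifs
  · simp [PowerSeries.coeff_zero_eq_constantCoeff, constCoeff_Pser]
  · rfl
  · simp_all

lemma sigmaP_zero (i : Fin 2) (m : ℤ) : sigmaP i m 0 = 1 := by
  unfold sigmaP
  split_ifs
  · simp [PowerSeries.coeff_zero_eq_constantCoeff, PowerSeries.constantCoeff_invOfUnit]
  · rfl
  · simp_all

lemma range_succ_eq_insert (p : ℕ) : Finset.range (p + 1) = insert 0 (Finset.Icc 1 p) := by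
  ext x; simp [Finset.mem_range, Nat.lt_succ_iff]; omega

lemma conv_inv (a b cc d : ℕ → GreedyRing)
    (hab : PowerSeries.mk a * PowerSeries.mk b = 1)
    (hd : ∀ p, d p = ∑ k ∈ Finset.range (p + 1), b k * cc (p - k)) :
    ∀ p, cc p = ∑ s ∈ Finset.range (p + 1), a s * d (p - s) := by
  have hD : PowerSeries.mk d = PowerSeries.mk b * PowerSeries.mk cc := by
    ext n
    rw [PowerSeries.coeff_mk, PowerSeries.coeff_mul,
      Finset.Nat.sum_antidiagonal_eq_sum_range_succ_mk, hd]
    simp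
  have hC : PowerSeries.mk cc = PowerSeries.mk a * PowerSeries.mk d := by
    rw [hD, ← mul_assoc, hab, one_mul]
  intro p
  have := congrArg (PowerSeries.coeff p) hC
  rw [PowerSeries.coeff_mk, PowerSeries.coeff_mul,
    Finset.Nat.sum_antidiagonal_eq_sum_range_succ_mk] at this
  simpa using this

/-- With `c(p,q)` defined by the T-max recursion and `d_±(p,q)` the corresponding
differences, one has
`c(p,q) = d_+(p,q) + ∑_{s=1}^{p} π_{d₂−q,s}(p_{1,•})·d_+(p−s,q)` and
`c(p,q) = d_-(p,q) + ∑_{s=1}^{q} π_{d₁−p,s}(p_{2,•})·d_-(p,q−s)`. -/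
theorem stmt2 (d₁ d₂ : ℤ) (c dplus dminus : ℕ → ℕ → GreedyRing)
    (hc0 : c 0 0 = 1)
    (hc : ∀ p q : ℕ, ¬(p = 0 ∧ q = 0) →
      c p q = Tmax
        (∑ k ∈ Finset.Icc 1 p, -(c (p - k) q * sigmaP 0 (d₂ - q) k))
        (∑ k ∈ Finset.Icc 1 q, -(c p (q - k) * sigmaP 1 (d₁ - p) k)))
    (hdp0 : dplus 0 0 = 1) (hdm0 : dminus 0 0 = 1)
    (hdp : ∀ p q : ℕ, ¬(p = 0 ∧ q = 0) →
      dplus p q = c p q - ∑ k ∈ Finset.Icc 1 p, -(c (p - k) q * sigmaP 0 (d₂ - q) k))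
    (hdm : ∀ p q : ℕ, ¬(p = 0 ∧ q = 0) →
      dminus p q = c p q - ∑ k ∈ Finset.Icc 1 q, -(c p (q - k) * sigmaP 1 (d₁ - p) k)) :
    ∀ p q : ℕ,
      c p q = dplus p q + ∑ s ∈ Finset.Icc 1 p, piP 0 (d₂ - q) s * dplus (p - s) q ∧
      c p q = dminus p q + ∑ s ∈ Finset.Icc 1 q, piP 1 (d₁ - p) s * dminus p (q - s) := by
  intro p q
  constructor
  · have hd : ∀ r, dplus r q =
        ∑ k ∈ Finset.range (r + 1), sigmaP 0 (d₂ - q) k * c (r - k) q := by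
      intro r
      by_cases h : r = 0 ∧ q = 0
      · obtain ⟨rfl, rfl⟩ := h
        simp [hdp0, hc0, sigmaP_zero]
      · rw [hdp r q h, range_succ_eq_insert, Finset.sum_insert (by simp),
          sigmaP_zero, one_mul, Nat.sub_zero]
        have hneg : ∑ k ∈ Finset.Icc 1 r, -(c (r - k) q * sigmaP 0 (d₂ - q) k)
            = -∑ k ∈ Finset.Icc 1 r, sigmaP 0 (d₂ - q) k * c (r - k) q := by
          rw [← Finset.sum_neg_distrib]
          exact Finset.sum_congr rfl fun k _ => by ring
        rw [hneg, sub_neg_eq_add]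
    have key := conv_inv (piP 0 (d₂ - q)) (sigmaP 0 (d₂ - q))
      (fun r => c r q) (fun r => dplus r q) (pi_sigma_mul 0 _) hd p
    rw [range_succ_eq_insert, Finset.sum_insert (by simp), piP_zero, one_mul,
      Nat.sub_zero] at key
    exact key
  · have hd : ∀ r, dminus p r =
        ∑ k ∈ Finset.range (r + 1), sigmaP 1 (d₁ - p) k * c p (r - k) := by
      intro r
      by_cases h : p = 0 ∧ r = 0
      · obtain ⟨rfl, rfl⟩ := h
        simp [hdm0, hc0, sigmaP_zero]
      · rw [hdm p r h, range_succ_eq_insert, Finset.sum_insert (by simp),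
          sigmaP_zero, one_mul, Nat.sub_zero]
        have hneg : ∑ k ∈ Finset.Icc 1 r, -(c p (r - k) * sigmaP 1 (d₁ - p) k)
            = -∑ k ∈ Finset.Icc 1 r, sigmaP 1 (d₁ - p) k * c p (r - k) := by
          rw [← Finset.sum_neg_distrib]
          exact Finset.sum_congr rfl fun k _ => by ring
        rw [hneg, sub_neg_eq_add]
    have key := conv_inv (piP 1 (d₁ - p)) (sigmaP 1 (d₁ - p))
      (fun r => c p r) (fun r => dminus p r) (pi_sigma_mul 1 _) hd q
    rw [range_succ_eq_insert, Finset.sum_insert (by simp), piP_zero, one_mul,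
      Nat.sub_zero] at key
    exact key
end

section
/- Suppose the integer pairs (d₁, d₂) and (ka, kb) with (a,b) coprime positive integers and k ≥ 1 satisfy (kab+1)/(kb²) ≥ d₁/d₂ > a/b. Then there exist no integers a₁, b₁ with 0 ≤ a₁ ≤ ka, 0 ≤ b₁ ≤ kb and d₁/d₂ > a₁/b₁ > a/b. -/
/-!
A fraction `a₁/b₁ > a/b` with `b₁ ≤ kb` satisfies `a₁ b - b₁ a ≥ 1`, hence
`a₁/b₁ ≥ a/b + 1/(b b₁) ≥ a/b + 1/(kb²) = (kab+1)/(kb²) ≥ d₁/d₂`.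
-/

theorem Nat.mul_add_one_mul_le_of_mul_lt {a b a₁ b₁ n : ℕ} (hb₁ : b₁ ≤ n)
    (h : b₁ * a < a₁ * b) : (n * a + 1) * b₁ ≤ n * b * a₁ := by
  have hgap : n * (b₁ * a + 1) ≤ n * (a₁ * b) := Nat.mul_le_mul_left n h
  nlinarith

theorem Nat.mul_le_mul_of_mul_lt_of_le_bound {a b a₁ b₁ n d₁ d₂ : ℕ}
    (hd : n * b * d₁ ≤ (n * a + 1) * d₂) (hb₁ : b₁ ≤ n) (h : b₁ * a < a₁ * b) :
    d₁ * b₁ ≤ d₂ * a₁ := by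
  have hb : 0 < b := Nat.pos_of_mul_pos_left (Nat.zero_le _ |>.trans_lt h)
  rcases Nat.eq_zero_or_pos b₁ with rfl | hb₁pos
  · simp
  have hnb : 0 < n * b := Nat.mul_pos (hb₁pos.trans_le hb₁) hb
  refine Nat.le_of_mul_le_mul_left ?_ hnb
  calc n * b * (d₁ * b₁) = n * b * d₁ * b₁ := by ring
    _ ≤ (n * a + 1) * d₂ * b₁ := Nat.mul_le_mul_right b₁ hd
    _ = d₂ * ((n * a + 1) * b₁) := by ring
    _ ≤ d₂ * (n * b * a₁) := Nat.mul_le_mul_left d₂ (Nat.mul_add_one_mul_le_of_mul_lt hb₁ h)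
    _ = n * b * (d₂ * a₁) := by ring

theorem stmt5_general (a b k d₁ d₂ : ℕ)
    (h1 : k * b ^ 2 * d₁ ≤ (k * a * b + 1) * d₂) :
    ¬ ∃ a₁ b₁ : ℕ, a₁ ≤ k * a ∧ b₁ ≤ k * b ∧ d₂ * a₁ < d₁ * b₁ ∧ b₁ * a < a₁ * b := by
  rintro ⟨a₁, b₁, -, hb₁, hlt, hab₁⟩
  have hd : k * b * b * d₁ ≤ (k * b * a + 1) * d₂ := by
    convert h1 using 2 <;> ring
  exact (Nat.mul_le_mul_of_mul_lt_of_le_bound hd hb₁ hab₁).not_gt hlt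

/-- Suppose `(a,b)` are coprime positive integers, `k ≥ 1`, and `d₁, d₂` are positive
integers with `(kab+1)/(kb²) ≥ d₁/d₂ > a/b` (written division-free).  Then there are
no integers `a₁, b₁` with `0 ≤ a₁ ≤ ka`, `0 ≤ b₁ ≤ kb` and `d₁/d₂ > a₁/b₁ > a/b`. -/
theorem stmt5 (a b k d₁ d₂ : ℕ) (hab : Nat.Coprime a b) (ha : 0 < a) (hb : 0 < b)
    (hk : 1 ≤ k) (hd₁ : 0 < d₁) (hd₂ : 0 < d₂)
    (h1 : k * b ^ 2 * d₁ ≤ (k * a * b + 1) * d₂) (h2 : a * d₂ < b * d₁) :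
    ¬ ∃ a₁ b₁ : ℕ, a₁ ≤ k * a ∧ b₁ ≤ k * b ∧ d₂ * a₁ < d₁ * b₁ ∧ b₁ * a < a₁ * b :=
  stmt5_general a b k d₁ d₂ h1
end

section
/- Let (ā, b̄) be coprime positive integers with b̄ ≤ ℓ₁, and let k ≥ 1. Then there are no integers a₁, b₁ with 0 ≤ a₁ ≤ kā, 0 ≤ b₁ ≤ kb̄ satisfying (kℓ₁ā + 1)/(kℓ₂b̄) > (ℓ₁a₁)/(ℓ₂b₁) > (ℓ₁ā)/(ℓ₂b̄). -/
/-!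
If `a₁/b₁` lies strictly above `a/b`, the gap `a₁/b₁ - a/b` is at least `1/(b b₁)`; if it also lies
below `(n a + 1)/(n b)`, the gap is less than `1/(n b)`, forcing `n < b₁`. With `n = k ℓ₁` this
contradicts `b₁ ≤ k b ≤ k ℓ₁`.
-/

theorem Nat.lt_of_lt_frac_lt_frac_add {a b a₁ b₁ n : ℕ} (hlow : a * b₁ < b * a₁)
    (hup : n * (b * a₁) < (n * a + 1) * b₁) : n < b₁ := by
  have hgap : n * (a * b₁ + 1) ≤ n * (b * a₁) := Nat.mul_le_mul_left n hlow
  nlinarith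

theorem stmt7_general (ℓ₁ ℓ₂ a b k : ℕ) (hbl : b ≤ ℓ₁) :
    ¬ ∃ a₁ b₁ : ℕ, a₁ ≤ k * a ∧ b₁ ≤ k * b ∧
      (k * ℓ₂ * b) * (ℓ₁ * a₁) < (k * ℓ₁ * a + 1) * (ℓ₂ * b₁) ∧
      (ℓ₂ * b₁) * (ℓ₁ * a) < (ℓ₁ * a₁) * (ℓ₂ * b) := by
  rintro ⟨a₁, b₁, -, hb₁, hup, hlow⟩
  have hlow' : a * b₁ < b * a₁ :=
    Nat.lt_of_mul_lt_mul_left (a := ℓ₁ * ℓ₂) (by convert hlow using 1 <;> ring)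
  have hup' : k * ℓ₁ * (b * a₁) < (k * ℓ₁ * a + 1) * b₁ :=
    Nat.lt_of_mul_lt_mul_left (a := ℓ₂) (by convert hup using 1 <;> ring)
  have hb₁_gt : k * ℓ₁ < b₁ := Nat.lt_of_lt_frac_lt_frac_add hlow' hup'
  have hb₁_le : b₁ ≤ k * ℓ₁ := hb₁.trans (Nat.mul_le_mul_left k hbl)
  omega

/-- Let `ℓ₁, ℓ₂` be positive integers, `(ā,b̄)` coprime positive integers with `b̄ ≤ ℓ₁`,
and `k ≥ 1`.  Then there are no integers `a₁, b₁` with `0 ≤ a₁ ≤ kā`, `0 ≤ b₁ ≤ kb̄`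
satisfying `(kℓ₁ā + 1)/(kℓ₂b̄) > (ℓ₁a₁)/(ℓ₂b₁) > (ℓ₁ā)/(ℓ₂b̄)`
(in the cross-multiplied, division-free form). -/
theorem stmt7 (ℓ₁ ℓ₂ a b k : ℕ) (hℓ₁ : 0 < ℓ₁) (hℓ₂ : 0 < ℓ₂)
    (ha : 0 < a) (hb : 0 < b) (hab : Nat.Coprime a b) (hbl : b ≤ ℓ₁) (hk : 1 ≤ k) :
    ¬ ∃ a₁ b₁ : ℕ, a₁ ≤ k * a ∧ b₁ ≤ k * b ∧
      (k * ℓ₂ * b) * (ℓ₁ * a₁) < (k * ℓ₁ * a + 1) * (ℓ₂ * b₁) ∧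
      (ℓ₂ * b₁) * (ℓ₁ * a) < (ℓ₁ * a₁) * (ℓ₂ * b) :=
  stmt7_general ℓ₁ ℓ₂ a b k hbl
end

section
/- For each k ≥ 1, the coefficients c_{i,k} defined by the polynomial identity ∑_{j=1}^{k} ((−1)^{j−1}/j)·Y^j = ∑_{i=0}^{k} c_{i,k}·(1+Y)^i (as polynomials in Y over ℚ) are given by c_{i,k} = ((−1)^{i−1}/i)·C(k,i) for 1 ≤ i ≤ k, where C(k,i) is the binomial coefficient. -/
open Polynomial

lemma key_term (i j : ℕ) (hi : 1 ≤ i) (hj : 1 ≤ j) :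
    ((-1 : ℚ) ^ (j - 1) / (j : ℚ)) * ((-1 : ℚ) ^ (j - i) * (j.choose i : ℚ)) =
    (-1 : ℚ) ^ (i - 1) / (i : ℚ) * ((j-1).choose (i-1) : ℚ) := by
  rcases lt_or_ge j i with hji | hij
  · rw [Nat.choose_eq_zero_of_lt hji, Nat.choose_eq_zero_of_lt (by omega)]
    simp
  · have hsign : (-1 : ℚ) ^ (j - 1) * (-1 : ℚ) ^ (j - i) = (-1 : ℚ) ^ (i - 1) := by
      rw [← pow_add]
      have : j - 1 + (j - i) = (i - 1) + 2 * (j - i) := by omega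
      rw [this, pow_add, pow_mul]
      simp
    have hcho : (i : ℚ) * (j.choose i : ℚ) = (j : ℚ) * ((j-1).choose (i-1) : ℚ) := by
      have := Nat.add_one_mul_choose_eq (j - 1) (i - 1)
      have h1 : j - 1 + 1 = j := by omega
      have h2 : i - 1 + 1 = i := by omega
      rw [h1, h2] at this
      exact_mod_cast (by linarith [congrArg (Nat.cast : ℕ → ℚ) this] : _)
    have hi0 : (i : ℚ) ≠ 0 := by positivity
    have hj0 : (j : ℚ) ≠ 0 := by positivity
    have hdiv : (j.choose i : ℚ) / (j : ℚ) = ((j-1).choose (i-1) : ℚ) / (i : ℚ) := by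
      rw [div_eq_div_iff hj0 hi0]; linarith
    calc ((-1 : ℚ) ^ (j - 1) / (j : ℚ)) * ((-1 : ℚ) ^ (j - i) * (j.choose i : ℚ))
        = ((-1 : ℚ) ^ (j - 1) * (-1 : ℚ) ^ (j - i)) * ((j.choose i : ℚ) / (j : ℚ)) := by ring
      _ = (-1 : ℚ) ^ (i - 1) * (((j-1).choose (i-1) : ℚ) / (i : ℚ)) := by rw [hsign, hdiv]
      _ = (-1 : ℚ) ^ (i - 1) / (i : ℚ) * ((j-1).choose (i-1) : ℚ) := by ring

lemma key_sum (i k : ℕ) (hi : 1 ≤ i) (hik : i ≤ k) :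
    ∑ j ∈ Finset.Icc 1 k, ((-1 : ℚ) ^ (j - 1) / (j : ℚ)) * ((-1 : ℚ) ^ (j - i) * (j.choose i : ℚ))
      = (-1 : ℚ) ^ (i - 1) / (i : ℚ) * (k.choose i : ℚ) := by
  rw [Finset.sum_congr rfl (fun j hj => key_term i j hi (Finset.mem_Icc.mp hj).1),
    ← Finset.mul_sum]
  congr 1
  have hnat : ∑ j ∈ Finset.Icc 1 k, (j-1).choose (i-1) = k.choose i := by
    rw [show Finset.Icc 1 k = Finset.Ico 1 (k+1) from (Finset.Ico_add_one_right_eq_Icc 1 k).symm,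
      Finset.sum_Ico_eq_sum_range]
    simp only [Nat.add_sub_cancel_left, add_tsub_cancel_left]
    have e1 : ∑ m ∈ Finset.range (k + 1 - 1), m.choose (i-1)
        = ∑ m ∈ Finset.Icc (i-1) (k-1), m.choose (i-1) := by
      rw [show k + 1 - 1 = k from rfl, Finset.range_eq_Ico,
        show Finset.Ico 0 k = Finset.Icc 0 (k-1) by
          ext x; simp [Finset.mem_Ico, Finset.mem_Icc]; omega]
      refine (Finset.sum_subset (Finset.Icc_subset_Icc_left (by omega)) ?_).symm
      intro x hx hnx
      simp only [Finset.mem_Icc] at hx hnx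
      exact Nat.choose_eq_zero_of_lt (by omega)
    rw [e1, Nat.sum_Icc_choose]
    congr 1 <;> omega
  calc ∑ j ∈ Finset.Icc 1 k, (((j-1).choose (i-1) : ℚ))
      = ((∑ j ∈ Finset.Icc 1 k, (j-1).choose (i-1) : ℕ) : ℚ) := by push_cast; rfl
    _ = (k.choose i : ℚ) := by rw [hnat]

/-- For each `k ≥ 1`, the coefficients `c i` determined by the polynomial identity
`∑_{j=1}^k ((−1)^{j−1}/j)·Y^j = ∑_{i=0}^k c_i·(1+Y)^i` over `ℚ` satisfy
`c i = ((−1)^{i−1}/i)·C(k,i)` for `1 ≤ i ≤ k`. -/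
theorem stmt8 (k : ℕ) (hk : 1 ≤ k) (c : ℕ → ℚ)
    (h : ∑ j ∈ Finset.Icc 1 k, Polynomial.C ((-1 : ℚ) ^ (j - 1) / (j : ℚ)) * X ^ j
      = ∑ i ∈ Finset.range (k + 1), Polynomial.C (c i) * (1 + X) ^ i) :
    ∀ i : ℕ, 1 ≤ i → i ≤ k → c i = (-1 : ℚ) ^ (i - 1) / (i : ℚ) * (Nat.choose k i : ℚ) := by
  intro i hi hik
  have h2 := congrArg (aeval (X - 1 : ℚ[X])) h
  simp only [map_sum, map_mul, map_pow, aeval_C, aeval_X, map_add, map_one,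
    add_sub_cancel, algebraMap_eq] at h2
  have h3 := congrArg (fun p => Polynomial.coeff p i) h2
  simp only [finset_sum_coeff, coeff_C_mul, coeff_X_pow] at h3
  rw [Finset.sum_eq_single i (fun b _ hb => by simp [if_neg (Ne.symm hb)])
    (fun hni => absurd (Finset.mem_range.mpr (by omega)) hni)] at h3
  simp only [if_pos rfl, if_true, mul_one] at h3
  have h4 : ∀ j ∈ Finset.Icc 1 k,
      (-1 : ℚ) ^ (j - 1) / (j : ℚ) * ((X - 1 : ℚ[X]) ^ j).coeff i
        = ((-1 : ℚ) ^ (j - 1) / (j : ℚ)) * ((-1 : ℚ) ^ (j - i) * (j.choose i : ℚ)) := by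
    intro j _
    rw [show (X - 1 : ℚ[X]) = X + C (-1 : ℚ) by simp [sub_eq_add_neg], coeff_X_add_C_pow]
  rw [Finset.sum_congr rfl h4, key_sum i k hi hik] at h3
  exact h3.symm
end

section
/- The following identity of rational functions holds: ∏_{1≤i<j≤4}(1 + sᵢsⱼ) / (1 − e₄)⁴ = (1 + e₂ + e₄)/(1 − e₄)² + (e₁e₄ + e₃)(e₁ + e₃)/(1 − e₄)⁴, where e₁, e₂, e₃, e₄ are the elementary symmetric polynomials in s₁, s₂, s₃, s₄. -/
/-- The field `ℚ(s₁,s₂,s₃,s₄)`. -/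
noncomputable abbrev RatField4 := FractionRing (MvPolynomial (Fin 4) ℚ)

theorem prod_one_add_mul_pairs_eq {R : Type*} [CommRing R] (s₁ s₂ s₃ s₄ : R) :
    (1 + s₁ * s₂) * (1 + s₁ * s₃) * (1 + s₁ * s₄) * (1 + s₂ * s₃) * (1 + s₂ * s₄) *
        (1 + s₃ * s₄)
      = (1 + (s₁ * s₂ + s₁ * s₃ + s₁ * s₄ + s₂ * s₃ + s₂ * s₄ + s₃ * s₄) + s₁ * s₂ * s₃ * s₄) *
          (1 - s₁ * s₂ * s₃ * s₄) ^ 2 +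
        ((s₁ + s₂ + s₃ + s₄) * (s₁ * s₂ * s₃ * s₄) +
            (s₁ * s₂ * s₃ + s₁ * s₂ * s₄ + s₁ * s₃ * s₄ + s₂ * s₃ * s₄)) *
          ((s₁ + s₂ + s₃ + s₄) +
            (s₁ * s₂ * s₃ + s₁ * s₂ * s₄ + s₁ * s₃ * s₄ + s₂ * s₃ * s₄)) := by
  ring

theorem MvPolynomial.one_sub_X_mul_X_mul_X_mul_X_ne_zero {σ R : Type*} [CommRing R]
    [Nontrivial R] (i j k l : σ) : (1 - X i * X j * X k * X l : MvPolynomial σ R) ≠ 0 := by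
  intro h
  simpa using congrArg constantCoeff h

/-- The rational-function identity (from the `ℓ₂ = 4`, `ℓ₁ = 1` affine example):
`∏_{1≤i<j≤4}(1 + sᵢsⱼ)/(1 − e₄)⁴ = (1 + e₂ + e₄)/(1 − e₄)² + (e₁e₄ + e₃)(e₁ + e₃)/(1 − e₄)⁴`,
where `eₖ` is the `k`-th elementary symmetric polynomial in `s₁,…,s₄`. -/
theorem stmt11 :
    let φ : MvPolynomial (Fin 4) ℚ →+* RatField4 :=
      algebraMap (MvPolynomial (Fin 4) ℚ) RatField4
    let s₁ : RatField4 := φ (MvPolynomial.X 0)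
    let s₂ : RatField4 := φ (MvPolynomial.X 1)
    let s₃ : RatField4 := φ (MvPolynomial.X 2)
    let s₄ : RatField4 := φ (MvPolynomial.X 3)
    let e₁ : RatField4 := s₁ + s₂ + s₃ + s₄
    let e₂ : RatField4 := s₁ * s₂ + s₁ * s₃ + s₁ * s₄ + s₂ * s₃ + s₂ * s₄ + s₃ * s₄
    let e₃ : RatField4 := s₁ * s₂ * s₃ + s₁ * s₂ * s₄ + s₁ * s₃ * s₄ + s₂ * s₃ * s₄
    let e₄ : RatField4 := s₁ * s₂ * s₃ * s₄
    (1 + s₁ * s₂) * (1 + s₁ * s₃) * (1 + s₁ * s₄) * (1 + s₂ * s₃) * (1 + s₂ * s₄) *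
        (1 + s₃ * s₄) / (1 - e₄) ^ 4
      = (1 + e₂ + e₄) / (1 - e₄) ^ 2 + (e₁ * e₄ + e₃) * (e₁ + e₃) / (1 - e₄) ^ 4 := by
  intro φ s₁ s₂ s₃ s₄ e₁ e₂ e₃ e₄
  have he₄ : 1 - e₄ ≠ 0 := by
    have hφ : 1 - e₄ = φ (1 - .X 0 * .X 1 * .X 2 * .X 3) := by simp [e₄, s₁, s₂, s₃, s₄]
    rw [hφ, map_ne_zero_iff φ (IsFractionRing.injective _ _)]
    exact MvPolynomial.one_sub_X_mul_X_mul_X_mul_X_ne_zero 0 1 2 3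
  have hnum : (1 + s₁ * s₂) * (1 + s₁ * s₃) * (1 + s₁ * s₄) * (1 + s₂ * s₃) * (1 + s₂ * s₄) *
      (1 + s₃ * s₄) = (1 + e₂ + e₄) * (1 - e₄) ^ 2 + (e₁ * e₄ + e₃) * (e₁ + e₃) :=
    prod_one_add_mul_pairs_eq s₁ s₂ s₃ s₄
  rw [hnum]
  field_simp
end

section
/- For the maximal Dyck path from (0,0) to (d₁,d₂) (the highest lattice path weakly below the main diagonal), if a horizontal edge u and vertical edge v satisfy |subpath(u→v)_N| = ω(u) (where subpath(u→v) proceeds cyclically east from u to v), and compatibility forces |subpath(u→v)_E| ≥ ω(sh(u)) + 1, then ω(sh(u))·d₂ < ω(u)·d₁. -/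
open Finset

attribute [local instance 10] Classical.propDecidable

namespace DyckGrading

/-- In the maximal Dyck path `P(d₁,d₂)` (the highest NE lattice path from `(0,0)` to
`(d₁,d₂)` staying weakly below the main diagonal), the `j`-th step (0-indexed) is an
east step iff `j = x + ⌊x·d₂/d₁⌋` for some `0 ≤ x < d₁`; the remaining steps are north. -/
def isEast (d₁ d₂ j : ℕ) : Prop := ∃ x : ℕ, x < d₁ ∧ j = x + x * d₂ / d₁

/-- The cyclic subpath `i → j` of edges of `P(d₁,d₂)` proceeding east (in path order,
cyclically) from edge `i` to edge `j`, inclusive. -/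
def arc (d₁ d₂ : ℕ) (i j : Fin (d₁ + d₂)) : Finset (Fin (d₁ + d₂)) :=
  if i ≤ j then Finset.Icc i j else Finset.Ici i ∪ Finset.Iic j

/-- The horizontal (east) edges of an edge set `C`. -/
noncomputable def eastOf (d₁ d₂ : ℕ) (C : Finset (Fin (d₁ + d₂))) : Finset (Fin (d₁ + d₂)) :=
  C.filter fun e => isEast d₁ d₂ (e : ℕ)

/-- The vertical (north) edges of an edge set `C`. -/
noncomputable def northOf (d₁ d₂ : ℕ) (C : Finset (Fin (d₁ + d₂))) : Finset (Fin (d₁ + d₂)) :=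
  C.filter fun e => ¬ isEast d₁ d₂ (e : ℕ)

/-- `ω(C) = ∑_{e ∈ C} ω(e)`: the total grade of a grading `ω` on an edge set `C`. -/
def wt (d₁ d₂ : ℕ) (ω : Fin (d₁ + d₂) → ℕ) (C : Finset (Fin (d₁ + d₂))) : ℕ :=
  ∑ e ∈ C, ω e

/-- A grading `ω : P(d₁,d₂) → ℕ` is compatible if for every horizontal edge `u` and
vertical edge `v` with `ω(u)·ω(v) > 0` there is an edge `e` on the cyclic subpath
`u → v` such that either `e` is vertical, `e ≠ v`, and `|(u→e)_N| = ω((u→e)_E)`,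
or `e` is horizontal, `e ≠ u`, and `|(e→v)_E| = ω((e→v)_N)`. -/
def Compatible (d₁ d₂ : ℕ) (ω : Fin (d₁ + d₂) → ℕ) : Prop :=
  ∀ u v : Fin (d₁ + d₂), isEast d₁ d₂ u → ¬ isEast d₁ d₂ v → ω u ≠ 0 → ω v ≠ 0 →
    ∃ e ∈ arc d₁ d₂ u v,
      (¬ isEast d₁ d₂ e ∧ e ≠ v ∧
        (northOf d₁ d₂ (arc d₁ d₂ u e)).card = wt d₁ d₂ ω (eastOf d₁ d₂ (arc d₁ d₂ u e))) ∨
      (isEast d₁ d₂ e ∧ e ≠ u ∧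
        (eastOf d₁ d₂ (arc d₁ d₂ e v)).card = wt d₁ d₂ ω (northOf d₁ d₂ (arc d₁ d₂ e v)))

/-- The shadow `sh(u)` of a horizontal edge `u`: the set `(u→v)_N` for `v` vertical with
`|(u→v)_N| = ω((u→v)_E)` and `u→v` of minimal length; if no such `v` exists, all of
`P_N`. -/
noncomputable def shEast (d₁ d₂ : ℕ) (ω : Fin (d₁ + d₂) → ℕ) (u : Fin (d₁ + d₂)) :
    Finset (Fin (d₁ + d₂)) :=
  let S : Finset (Fin (d₁ + d₂)) := Finset.univ.filter fun v =>
    ¬ isEast d₁ d₂ v ∧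
      (northOf d₁ d₂ (arc d₁ d₂ u v)).card = wt d₁ d₂ ω (eastOf d₁ d₂ (arc d₁ d₂ u v))
  if h : S.Nonempty then
    northOf d₁ d₂ (arc d₁ d₂ u
      (Classical.choose (S.exists_min_image (fun v => (arc d₁ d₂ u v).card) h)))
  else northOf d₁ d₂ Finset.univ

/-- The shadow `sh(v)` of a vertical edge `v`: the set `(u→v)_E` for `u` horizontal with
`|(u→v)_E| = ω((u→v)_N)` and `u→v` of minimal length; if no such `u` exists, all of
`P_E`. -/
noncomputable def shNorth (d₁ d₂ : ℕ) (ω : Fin (d₁ + d₂) → ℕ) (v : Fin (d₁ + d₂)) :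
    Finset (Fin (d₁ + d₂)) :=
  let S : Finset (Fin (d₁ + d₂)) := Finset.univ.filter fun u =>
    isEast d₁ d₂ u ∧
      (eastOf d₁ d₂ (arc d₁ d₂ u v)).card = wt d₁ d₂ ω (northOf d₁ d₂ (arc d₁ d₂ u v))
  if h : S.Nonempty then
    eastOf d₁ d₂ (arc d₁ d₂
      (Classical.choose (S.exists_min_image (fun u => (arc d₁ d₂ u v).card) h)) v)
  else eastOf d₁ d₂ Finset.univ

/-- A grading is shadowed if it is compatible and `S_E ⊆ sh(P_N)` or `S_N ⊆ sh(P_E)`,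
where `S` is the support of `ω`. -/
def Shadowed (d₁ d₂ : ℕ) (ω : Fin (d₁ + d₂) → ℕ) : Prop :=
  Compatible d₁ d₂ ω ∧
    ((Finset.univ.filter fun e : Fin (d₁ + d₂) => isEast d₁ d₂ (e : ℕ) ∧ ω e ≠ 0) ⊆
        (northOf d₁ d₂ Finset.univ).sup (fun v => shNorth d₁ d₂ ω v) ∨
      (Finset.univ.filter fun e : Fin (d₁ + d₂) => ¬ isEast d₁ d₂ (e : ℕ) ∧ ω e ≠ 0) ⊆
        (eastOf d₁ d₂ Finset.univ).sup (fun u => shEast d₁ d₂ ω u))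

/-- A grading is tight if it is shadowed, its total vertical grade `p = ω(P_N)` satisfies
`p ≤ d₁`, its total horizontal grade `q = ω(P_E)` satisfies `q ≤ d₂`, and
`p·d₂ − q·d₁ = ± gcd(p,q)`. -/
def Tight (d₁ d₂ : ℕ) (ω : Fin (d₁ + d₂) → ℕ) : Prop :=
  Shadowed d₁ d₂ ω ∧
    wt d₁ d₂ ω (northOf d₁ d₂ Finset.univ) ≤ d₁ ∧
    wt d₁ d₂ ω (eastOf d₁ d₂ Finset.univ) ≤ d₂ ∧
    ((wt d₁ d₂ ω (northOf d₁ d₂ Finset.univ) : ℤ) * d₂ -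
        (wt d₁ d₂ ω (eastOf d₁ d₂ Finset.univ) : ℤ) * d₁ =
        (Nat.gcd (wt d₁ d₂ ω (northOf d₁ d₂ Finset.univ))
          (wt d₁ d₂ ω (eastOf d₁ d₂ Finset.univ)) : ℤ) ∨
      (wt d₁ d₂ ω (northOf d₁ d₂ Finset.univ) : ℤ) * d₂ -
        (wt d₁ d₂ ω (eastOf d₁ d₂ Finset.univ) : ℤ) * d₁ =
        -(Nat.gcd (wt d₁ d₂ ω (northOf d₁ d₂ Finset.univ))
          (wt d₁ d₂ ω (eastOf d₁ d₂ Finset.univ)) : ℤ))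

end DyckGrading

namespace DyckAux

open DyckGrading Finset

/-- Number of east steps among positions `0, …, m-1`. -/
noncomputable def ec (d₁ d₂ m : ℕ) : ℕ := ((Finset.range m).filter (isEast d₁ d₂)).card

lemma g_strictMono (d₁ d₂ : ℕ) : StrictMono (fun x : ℕ => x + x * d₂ / d₁) := by
  intro a b hab
  have : a * d₂ / d₁ ≤ b * d₂ / d₁ :=
    Nat.div_le_div_right (Nat.mul_le_mul_right _ hab.le)
  simp only
  omega

lemma g_lt_iff (d₁ d₂ m x : ℕ) (hd₁ : 0 < d₁) :
    x + x * d₂ / d₁ < m ↔ x * (d₁ + d₂) < m * d₁ := by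
  have h1 : x * (d₁ + d₂) / d₁ = x + x * d₂ / d₁ := by
    rw [Nat.mul_add, show x * d₁ = d₁ * x by ring, Nat.mul_add_div hd₁]
  rw [← h1, Nat.div_lt_iff_lt_mul hd₁]

lemma ec_eq (d₁ d₂ m : ℕ) (hd₁ : 0 < d₁) :
    ec d₁ d₂ m = ((Finset.range d₁).filter (fun x => x * (d₁ + d₂) < m * d₁)).card := by
  classical
  have himg : (Finset.range m).filter (isEast d₁ d₂)
      = ((Finset.range d₁).filter (fun x => x * (d₁ + d₂) < m * d₁)).image
          (fun x => x + x * d₂ / d₁) := by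
    ext j
    simp only [Finset.mem_filter, Finset.mem_range, Finset.mem_image, isEast]
    constructor
    · rintro ⟨hjm, x, hx, rfl⟩
      exact ⟨x, ⟨hx, (g_lt_iff d₁ d₂ m x hd₁).1 hjm⟩, rfl⟩
    · rintro ⟨x, ⟨hx, hxm⟩, rfl⟩
      exact ⟨(g_lt_iff d₁ d₂ m x hd₁).2 hxm, x, hx, rfl⟩
  rw [ec, himg, Finset.card_image_of_injective _ ((g_strictMono d₁ d₂).injective)]

lemma ec_lower (d₁ d₂ m : ℕ) (hd₁ : 0 < d₁) (hm : m ≤ d₁ + d₂) :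
    m * d₁ ≤ ec d₁ d₂ m * (d₁ + d₂) := by
  classical
  by_contra hcon
  push_neg at hcon
  set c := ec d₁ d₂ m with hc
  have hcd : c < d₁ := by
    have h1 : c * (d₁ + d₂) < d₁ * (d₁ + d₂) := by
      calc c * (d₁ + d₂) < m * d₁ := hcon
        _ ≤ (d₁ + d₂) * d₁ := Nat.mul_le_mul_right _ hm
        _ = d₁ * (d₁ + d₂) := by ring
    exact Nat.lt_of_mul_lt_mul_right h1
  have hsub : Finset.range (c + 1) ⊆
      (Finset.range d₁).filter (fun x => x * (d₁ + d₂) < m * d₁) := by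
    intro x hx
    rw [Finset.mem_range] at hx
    rw [Finset.mem_filter, Finset.mem_range]
    constructor
    · omega
    · calc x * (d₁ + d₂) ≤ c * (d₁ + d₂) := Nat.mul_le_mul_right _ (by omega)
        _ < m * d₁ := hcon
  have := Finset.card_le_card hsub
  rw [Finset.card_range, ← ec_eq d₁ d₂ m hd₁, ← hc] at this
  omega

lemma ec_upper (d₁ d₂ m : ℕ) (hd₁ : 0 < d₁) (hd₂ : 0 < d₂) :
    ec d₁ d₂ m * (d₁ + d₂) < m * d₁ + (d₁ + d₂) := by
  classical
  set n := d₁ + d₂ with hn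
  have hnpos : 0 < n := by omega
  have hsub : (Finset.range d₁).filter (fun x => x * n < m * d₁) ⊆
      Finset.range ((m * d₁ + n - 1) / n) := by
    intro x hx
    rw [Finset.mem_filter] at hx
    rw [Finset.mem_range]
    have hx2 : x * n < m * d₁ := hx.2
    have hpos : 1 ≤ m * d₁ := by omega
    have : x + 1 ≤ (m * d₁ + n - 1) / n := by
      rw [Nat.le_div_iff_mul_le hnpos]
      calc (x + 1) * n = x * n + n := by ring
        _ ≤ (m * d₁ - 1) + n := by
            have := Nat.le_sub_one_of_lt hx2
            omega
        _ = m * d₁ + n - 1 := (Nat.sub_add_comm hpos).symm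
    omega
  have hcard := Finset.card_le_card hsub
  rw [Finset.card_range, ← ec_eq d₁ d₂ m hd₁] at hcard
  have h2 : ec d₁ d₂ m * n ≤ ((m * d₁ + n - 1) / n) * n := Nat.mul_le_mul_right _ hcard
  have h3 : ((m * d₁ + n - 1) / n) * n ≤ m * d₁ + n - 1 := Nat.div_mul_le_self _ _
  omega

lemma ec_total (d₁ d₂ : ℕ) (hd₁ : 0 < d₁) (hd₂ : 0 < d₂) :
    ec d₁ d₂ (d₁ + d₂) = d₁ := by
  have h1 := ec_lower d₁ d₂ (d₁ + d₂) hd₁ le_rfl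
  have h2 := ec_upper d₁ d₂ (d₁ + d₂) hd₁ hd₂
  set n := d₁ + d₂ with hn
  have hnpos : 0 < n := by omega
  have hle : d₁ ≤ ec d₁ d₂ n := by
    apply Nat.le_of_mul_le_mul_right _ hnpos
    calc d₁ * n = n * d₁ := by ring
      _ ≤ ec d₁ d₂ n * n := h1
  have hge : ec d₁ d₂ n < d₁ + 1 := by
    apply Nat.lt_of_mul_lt_mul_right (a := n)
    calc ec d₁ d₂ n * n < n * d₁ + n := h2
      _ = (d₁ + 1) * n := by ring
  omega

lemma ec_succ_of_not_east (d₁ d₂ j : ℕ) (hj : ¬ isEast d₁ d₂ j) :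
    ec d₁ d₂ (j + 1) = ec d₁ d₂ j := by
  classical
  rw [ec, ec, Finset.range_add_one, Finset.filter_insert, if_neg hj]

lemma card_filter_val (n : ℕ) (P : ℕ → Prop) (s : Finset (Fin n)) :
    (s.filter fun e => P e.val).card = ((s.map Fin.valEmbedding).filter P).card := by
  classical
  have h : ((s.filter fun e => P e.val).map Fin.valEmbedding)
      = (s.map Fin.valEmbedding).filter P := by
    ext j
    simp only [Finset.mem_map, Finset.mem_filter, Fin.valEmbedding_apply]
    constructor
    · rintro ⟨x, ⟨hx, hpx⟩, rfl⟩
      exact ⟨⟨x, hx, rfl⟩, hpx⟩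
    · rintro ⟨⟨x, hx, rfl⟩, hpx⟩
      exact ⟨x, ⟨hx, hpx⟩, rfl⟩
  rw [← h, Finset.card_map]

lemma Iic_eq_range (b : ℕ) : Finset.Iic b = Finset.range (b + 1) := by
  ext x
  simp [Nat.lt_succ_iff]

lemma filter_Ico_card (P : ℕ → Prop) (a b : ℕ) (h : a ≤ b) :
    ((Finset.Ico a b).filter P).card + ((Finset.range a).filter P).card
      = ((Finset.range b).filter P).card := by
  classical
  rw [Finset.range_eq_Ico, Finset.range_eq_Ico,
    ← Finset.Ico_union_Ico_eq_Ico (Nat.zero_le a) h, Finset.filter_union,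
    Finset.card_union_of_disjoint
      (Finset.disjoint_filter_filter (Finset.Ico_disjoint_Ico_consecutive 0 a b))]
  omega

end DyckAux


open DyckGrading in
/-- On the maximal Dyck path `P(d₁,d₂)`, if a horizontal edge `u` and a vertical edge `v`
satisfy `|(u→v)_N| = ω(u)` and `|(u→v)_E| ≥ ω(sh(u)) + 1` (as forced by compatibility),
then `ω(sh(u))·d₂ < ω(u)·d₁`. -/
theorem stmt13 (d₁ d₂ : ℕ) (hd₁ : 0 < d₁) (hd₂ : 0 < d₂) (ω : Fin (d₁ + d₂) → ℕ)
    (u v : Fin (d₁ + d₂)) (hu : isEast d₁ d₂ u) (hv : ¬ isEast d₁ d₂ v)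
    (hN : (northOf d₁ d₂ (arc d₁ d₂ u v)).card = ω u)
    (hE : wt d₁ d₂ ω (shEast d₁ d₂ ω u) + 1 ≤ (eastOf d₁ d₂ (arc d₁ d₂ u v)).card) :
    wt d₁ d₂ ω (shEast d₁ d₂ ω u) * d₂ < ω u * d₁ := by
  classical
  open DyckAux in
  set a := wt d₁ d₂ ω (shEast d₁ d₂ ω u) with ha
  set A := arc d₁ d₂ u v with hA
  set c := (eastOf d₁ d₂ A).card with hc
  set N := (northOf d₁ d₂ A).card with hNdef
  have hEN : c + N = A.card := by
    rw [hc, hNdef, eastOf, northOf]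
    exact Finset.card_filter_add_card_filter_not _
  set U := (u : ℕ) with hU
  set V := (v : ℕ) with hV
  have hUn : U < d₁ + d₂ := u.isLt
  have hVn : V < d₁ + d₂ := v.isLt
  have hcval : c = ((A.map Fin.valEmbedding).filter (isEast d₁ d₂)).card := by
    rw [hc, eastOf]
    exact card_filter_val (d₁ + d₂) (isEast d₁ d₂) A
  have hlowU : U * d₁ ≤ ec d₁ d₂ U * (d₁ + d₂) := ec_lower d₁ d₂ U hd₁ (by omega)
  have hupV : ec d₁ d₂ V * (d₁ + d₂) < V * d₁ + (d₁ + d₂) := ec_upper d₁ d₂ V hd₁ hd₂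
  have hsucc : ec d₁ d₂ (V + 1) = ec d₁ d₂ V := ec_succ_of_not_east d₁ d₂ V hv
  have htot : ec d₁ d₂ (d₁ + d₂) = d₁ := ec_total d₁ d₂ hd₁ hd₂
  rw [← hN]
  have h1 : (U : ℤ) * d₁ ≤ (ec d₁ d₂ U : ℤ) * ((d₁ : ℤ) + d₂) := by exact_mod_cast hlowU
  have h2 : (ec d₁ d₂ V : ℤ) * ((d₁ : ℤ) + d₂) < (V : ℤ) * d₁ + ((d₁ : ℤ) + d₂) := by
    exact_mod_cast hupV
  have h6 : (a : ℤ) + 1 ≤ c := by exact_mod_cast hE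
  have hint : ((c : ℤ) - 1 - a) * d₂ ≥ 0 := mul_nonneg (by omega) (by positivity)
  by_cases huv : u ≤ v
  · -- A = Icc u v
    have hUV : U ≤ V := huv
    have hmap : A.map Fin.valEmbedding = Finset.Ico U (V + 1) := by
      rw [hA, arc, if_pos huv, Fin.map_valEmbedding_Icc, Finset.Ico_add_one_right_eq_Icc]
    have hcardA : A.card = V + 1 - U := by
      rw [show A.card = (A.map Fin.valEmbedding).card from (Finset.card_map _).symm,
        hmap, Nat.card_Ico]
    have hcec : c + ec d₁ d₂ U = ec d₁ d₂ (V + 1) := by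
      rw [hcval, hmap]
      exact filter_Ico_card (isEast d₁ d₂) U (V + 1) (by omega)
    rw [hsucc] at hcec
    have hCN : c + N = V + 1 - U := by rw [hEN, hcardA]
    have h3 : (c : ℤ) + (ec d₁ d₂ U : ℤ) = (ec d₁ d₂ V : ℤ) := by exact_mod_cast hcec
    have h3' : (c : ℤ) * ((d₁ : ℤ) + d₂) + (ec d₁ d₂ U : ℤ) * ((d₁ : ℤ) + d₂)
        = (ec d₁ d₂ V : ℤ) * ((d₁ : ℤ) + d₂) := by
      linear_combination ((d₁ : ℤ) + d₂) * h3
    have hN5 : (N : ℤ) = (V : ℤ) + 1 - U - c := by omega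
    have hNd' : (N : ℤ) * d₁ = (V : ℤ) * d₁ + d₁ - (U : ℤ) * d₁ - (c : ℤ) * d₁ := by
      linear_combination (d₁ : ℤ) * hN5
    have goalZ : (a : ℤ) * d₂ < (N : ℤ) * d₁ := by linarith [h1, h2, h3', hNd', hint]
    exact_mod_cast goalZ
  · -- A = Ici u ∪ Iic v, with V < U
    have hVU : V < U := by
      have : ¬ (U ≤ V) := fun h => huv (by exact h)
      omega
    have hmap : A.map Fin.valEmbedding
        = Finset.Ico U (d₁ + d₂) ∪ Finset.range (V + 1) := by
      rw [hA, arc, if_neg huv, Finset.map_union, Fin.map_valEmbedding_Ici,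
        Fin.map_valEmbedding_Iic, Iic_eq_range, Finset.range_eq_Ico]
    have hdisj : Disjoint (Finset.Ico U (d₁ + d₂)) (Finset.range (V + 1)) := by
      rw [Finset.range_eq_Ico]
      exact ((Finset.Ico_disjoint_Ico_consecutive 0 (V + 1) (d₁ + d₂)).symm.mono
        (Finset.Ico_subset_Ico (by omega) le_rfl) le_rfl)
    have hcardA : A.card = (d₁ + d₂ - U) + (V + 1) := by
      rw [show A.card = (A.map Fin.valEmbedding).card from (Finset.card_map _).symm,
        hmap, Finset.card_union_of_disjoint hdisj, Nat.card_Ico, Finset.card_range]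
    have hIcoEc : ((Finset.Ico U (d₁ + d₂)).filter (isEast d₁ d₂)).card + ec d₁ d₂ U
        = ec d₁ d₂ (d₁ + d₂) := filter_Ico_card (isEast d₁ d₂) U (d₁ + d₂) (by omega)
    have hcec : c + ec d₁ d₂ U = d₁ + ec d₁ d₂ (V + 1) := by
      rw [hcval, hmap, Finset.filter_union,
        Finset.card_union_of_disjoint (Finset.disjoint_filter_filter hdisj)]
      have hr : ((Finset.range (V + 1)).filter (isEast d₁ d₂)).card = ec d₁ d₂ (V + 1) :=
        rfl
      omega
    rw [hsucc] at hcec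
    have hCN : c + N = (d₁ + d₂ - U) + (V + 1) := by rw [hEN, hcardA]
    have h3 : (c : ℤ) + (ec d₁ d₂ U : ℤ) = (d₁ : ℤ) + (ec d₁ d₂ V : ℤ) := by
      exact_mod_cast hcec
    have h3' : (c : ℤ) * ((d₁ : ℤ) + d₂) + (ec d₁ d₂ U : ℤ) * ((d₁ : ℤ) + d₂)
        = (d₁ : ℤ) * ((d₁ : ℤ) + d₂) + (ec d₁ d₂ V : ℤ) * ((d₁ : ℤ) + d₂) := by
      linear_combination ((d₁ : ℤ) + d₂) * h3
    have hN5 : (N : ℤ) = (d₁ : ℤ) + d₂ + V + 1 - U - c := by omega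
    have hNd' : (N : ℤ) * d₁ = (d₁ : ℤ) * d₁ + (d₂ : ℤ) * d₁ + (V : ℤ) * d₁ + d₁
        - (U : ℤ) * d₁ - (c : ℤ) * d₁ := by
      linear_combination (d₁ : ℤ) * hN5
    have goalZ : (a : ℤ) * d₂ < (N : ℤ) * d₁ := by linarith [h1, h2, h3', hNd', hint]
    exact_mod_cast goalZ
end

section
/- Let ℓ₁ = ℓ₂ = 2 and consider the maximal Dyck path P(2k, 2k+1) for k ∈ ℕ. The number of compatible gradings ω on P(2k, 2k+1) such that ω takes value 2 on exactly k horizontal edges, value 2 on exactly k vertical edges, and 0 elsewhere, and which are tight, equals k+1. -/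
open Finset

attribute [local instance 10] Classical.propDecidable

namespace DG14
open DyckGrading

def amem (s t j : ℕ) : Prop := (s ≤ t ∧ s ≤ j ∧ j ≤ t) ∨ (t < s ∧ (s ≤ j ∨ j ≤ t))

lemma isEast_iff (k j : ℕ) : isEast (2*k) (2*k+1) j ↔ j % 2 = 0 ∧ j < 4*k := by
  have key : ∀ x, x < 2*k → x + x*(2*k+1)/(2*k) = 2*x := by
    intro x hx
    have h1 : x*(2*k+1) = 2*k*x + x := by ring
    have h2 : (2*k*x + x) / (2*k) = x + x/(2*k) := Nat.mul_add_div (by omega) x x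
    have h3 : x / (2*k) = 0 := Nat.div_eq_of_lt hx
    rw [h1, h2, h3]; ring
  constructor
  · rintro ⟨x, hx, rfl⟩; have := key x hx; omega
  · rintro ⟨h1, h2⟩
    exact ⟨j/2, by omega, by have := key (j/2) (by omega); omega⟩

lemma arc_eq (k : ℕ) (u v : Fin (2*k+(2*k+1))) :
    arc (2*k) (2*k+1) u v = univ.filter (fun e => amem u.val v.val e.val) := by
  unfold arc amem
  split_ifs with h
  · rw [Fin.le_def] at h
    ext e
    simp only [Finset.mem_Icc, mem_filter, mem_univ, true_and, Fin.le_def]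
    omega
  · rw [Fin.le_def] at h
    ext e
    simp only [Finset.mem_union, Finset.mem_Ici, Finset.mem_Iic, mem_filter, mem_univ, true_and,
      Fin.le_def]
    omega

lemma eastOf_filter (k : ℕ) (p : ℕ → Prop) [DecidablePred p] :
    eastOf (2*k) (2*k+1) ((univ : Finset (Fin (2*k+(2*k+1)))).filter fun e => p e.val)
      = univ.filter (fun e => p e.val ∧ (e.val % 2 = 0 ∧ e.val < 4*k)) := by
  unfold eastOf
  rw [Finset.filter_filter]
  apply Finset.filter_congr
  intro e _
  rw [isEast_iff]

lemma northOf_filter (k : ℕ) (p : ℕ → Prop) [DecidablePred p] :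
    northOf (2*k) (2*k+1) ((univ : Finset (Fin (2*k+(2*k+1)))).filter fun e => p e.val)
      = univ.filter (fun e => p e.val ∧ ¬(e.val % 2 = 0 ∧ e.val < 4*k)) := by
  unfold northOf
  rw [Finset.filter_filter]
  apply Finset.filter_congr
  intro e _
  rw [isEast_iff]

/-- value of `ω` on index `j : ℕ`. -/
noncomputable def wnat (k : ℕ) (ω : Fin (2*k+(2*k+1)) → ℕ) (j : ℕ) : ℕ :=
  if h : j < 2*k+(2*k+1) then ω ⟨j, h⟩ else 0

lemma wnat_val (k : ℕ) (ω : Fin (2*k+(2*k+1)) → ℕ) (e : Fin (2*k+(2*k+1))) :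
    wnat k ω e.val = ω e := by
  unfold wnat
  rw [dif_pos e.isLt]

lemma card_filter_univ (k : ℕ) (q : Fin (2*k+(2*k+1)) → Prop) [DecidablePred q]
    (p : ℕ → Prop) [DecidablePred p] (h : ∀ e, q e ↔ p e.val) :
    ((univ : Finset (Fin (2*k+(2*k+1)))).filter q).card
      = ∑ j ∈ range (2*k+(2*k+1)), if p j then 1 else 0 := by
  rw [Finset.card_filter]
  rw [← Fin.sum_univ_eq_sum_range (fun j => if p j then 1 else 0) _]
  apply Finset.sum_congr rfl
  intro e _
  exact if_congr (h e) rfl rfl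

lemma wt_filter (k : ℕ) (ω : Fin (2*k+(2*k+1)) → ℕ) (q : Fin (2*k+(2*k+1)) → Prop)
    [DecidablePred q] (p : ℕ → Prop) [DecidablePred p] (h : ∀ e, q e ↔ p e.val) :
    wt (2*k) (2*k+1) ω ((univ : Finset (Fin (2*k+(2*k+1)))).filter q)
      = ∑ j ∈ range (2*k+(2*k+1)), if p j then wnat k ω j else 0 := by
  unfold wt
  rw [Finset.sum_filter]
  rw [← Fin.sum_univ_eq_sum_range (fun j => if p j then wnat k ω j else 0) _]
  apply Finset.sum_congr rfl
  intro e _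
  rw [← wnat_val k ω e]
  exact if_congr (h e) rfl rfl

lemma sum_range_even_odd (m : ℕ) (f : ℕ → ℕ) :
    ∑ j ∈ range (2*m), f j = ∑ a ∈ range m, (f (2*a) + f (2*a+1)) := by
  induction m with
  | zero => simp
  | succ m ih =>
    rw [show 2*(m+1) = 2*m+1+1 by ring, Finset.sum_range_succ, Finset.sum_range_succ, ih,
      Finset.sum_range_succ]
    omega

lemma sum_split (k : ℕ) (f : ℕ → ℕ) :
    ∑ j ∈ range (2*k+(2*k+1)), f j
      = (∑ a ∈ range (2*k), (f (2*a) + f (2*a+1))) + f (4*k) := by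
  rw [show 2*k+(2*k+1) = 2*(2*k)+1 by ring, Finset.sum_range_succ, sum_range_even_odd,
    show 2*(2*k) = 4*k by ring]

lemma sum_ite_interval (m lo hi c : ℕ) (hhi : hi ≤ m) :
    ∑ a ∈ range m, (if lo ≤ a ∧ a < hi then c else 0) = (hi - lo) * c := by
  rw [← Finset.sum_filter]
  have h : (range m).filter (fun a => lo ≤ a ∧ a < hi) = Finset.Ico lo hi := by
    ext a
    simp only [mem_filter, mem_range, Finset.mem_Ico]
    omega
  rw [h, Finset.sum_const, Nat.card_Ico, smul_eq_mul]

lemma sum_ite_interval2 (m l1 h1 l2 h2 c : ℕ) (hd : h1 ≤ l2) (hm1 : h1 ≤ m) (hm2 : h2 ≤ m) :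
    ∑ a ∈ range m, (if (l1 ≤ a ∧ a < h1) ∨ (l2 ≤ a ∧ a < h2) then c else 0)
      = (h1 - l1) * c + (h2 - l2) * c := by
  have key : ∀ a : ℕ, (if (l1 ≤ a ∧ a < h1) ∨ (l2 ≤ a ∧ a < h2) then c else 0)
      = (if l1 ≤ a ∧ a < h1 then c else 0) + (if l2 ≤ a ∧ a < h2 then c else 0) := by
    intro a
    split_ifs <;> omega
  calc ∑ a ∈ range m, (if (l1 ≤ a ∧ a < h1) ∨ (l2 ≤ a ∧ a < h2) then c else 0)
      = ∑ a ∈ range m, ((if l1 ≤ a ∧ a < h1 then c else 0) + (if l2 ≤ a ∧ a < h2 then c else 0)) :=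
        Finset.sum_congr rfl (fun a _ => key a)
    _ = _ := by rw [Finset.sum_add_distrib, sum_ite_interval _ _ _ _ hm1, sum_ite_interval _ _ _ _ hm2]

lemma pipe (k c : ℕ) (P : ℕ → Prop) [DecidablePred P] (l1 h1 l1' h1' l2 h2 l2' h2' : ℕ)
    (hd1 : h1 ≤ l1') (hd2 : h2 ≤ l2')
    (hm1 : h1 ≤ 2*k) (hm1' : h1' ≤ 2*k) (hm2 : h2 ≤ 2*k) (hm2' : h2' ≤ 2*k)
    (H1 : ∀ a, a < 2*k → (P (2*a) ↔ ((l1 ≤ a ∧ a < h1) ∨ (l1' ≤ a ∧ a < h1'))))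
    (H2 : ∀ a, a < 2*k → (P (2*a+1) ↔ ((l2 ≤ a ∧ a < h2) ∨ (l2' ≤ a ∧ a < h2')))) :
    ∑ j ∈ range (2*k+(2*k+1)), (if P j then c else 0)
      = ((h1 - l1) * c + (h1' - l1') * c)
        + (((h2 - l2) * c + (h2' - l2') * c)
        + (if P (4*k) then c else 0)) := by
  rw [sum_split k (fun j => if P j then c else 0), Finset.sum_add_distrib, add_assoc]
  congr 1
  · rw [← sum_ite_interval2 (2*k) l1 h1 l1' h1' c hd1 hm1 hm1']
    apply Finset.sum_congr rfl
    intro a ha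
    rw [mem_range] at ha
    exact if_congr (H1 a ha) rfl rfl
  congr 1
  · rw [← sum_ite_interval2 (2*k) l2 h2 l2' h2' c hd2 hm2 hm2']
    apply Finset.sum_congr rfl
    intro a ha
    rw [mem_range] at ha
    exact if_congr (H2 a ha) rfl rfl

lemma ite_ite {P Q : Prop} [Decidable P] [Decidable Q] (c : ℕ) :
    (if P then (if Q then c else 0) else 0) = if P ∧ Q then c else 0 := by
  split_ifs <;> simp_all

/-- the support condition of the `i`-th tight grading -/
def wcond (k i j : ℕ) : Prop :=
  (j % 2 = 0 ∧ j < 4*k ∧ i ≤ j/2 ∧ j/2 < i+k) ∨ ((j % 2 = 1 ∨ j = 4*k) ∧ (j/2 < i ∨ i+k < j/2))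

/-- the `i`-th tight grading -/
noncomputable def w (k i : ℕ) : Fin (2*k + (2*k+1)) → ℕ := fun e => if wcond k i e.val then 2 else 0

lemma w_eq_two_iff (k i : ℕ) (e : Fin (2*k+(2*k+1))) : w k i e = 2 ↔ wcond k i e.val := by
  unfold w
  split_ifs with h <;> simp [h]

lemma w_vals (k i : ℕ) (e : Fin (2*k+(2*k+1))) : w k i e = 0 ∨ w k i e = 2 := by
  unfold w
  split_ifs <;> simp

lemma wt_w_sum (k i : ℕ) (p : ℕ → Prop) [DecidablePred p] :
    ∑ j ∈ range (2*k+(2*k+1)), (if p j then wnat k (w k i) j else 0)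
      = ∑ j ∈ range (2*k+(2*k+1)), (if p j ∧ wcond k i j then 2 else 0) := by
  apply Finset.sum_congr rfl
  intro j hj
  rw [mem_range] at hj
  rw [wnat, dif_pos hj]
  simp only [w]
  rw [ite_ite]

lemma countE_w (k i : ℕ) (hik : i ≤ k) :
    ((univ : Finset (Fin (2*k+(2*k+1)))).filter
      (fun e : Fin (2*k+(2*k+1)) => isEast (2*k) (2*k+1) (e : ℕ) ∧ w k i e = 2)).card = k := by
  rw [card_filter_univ k _ (fun j => (j % 2 = 0 ∧ j < 4*k) ∧ wcond k i j)
      (fun e => by rw [isEast_iff, w_eq_two_iff]),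
    pipe k 1 _ i (i+k) (i+k) (i+k) 0 0 0 0 (by omega) (by omega) (by omega) (by omega) (by omega) (by omega)
    (by intro a ha; simp only [wcond]; omega) (by intro a ha; simp only [wcond]; omega)]
  rw [if_neg (by simp only [wcond, or_true, true_or, and_true, true_and]; omega)]
  omega

lemma countN_w (k i : ℕ) (hik : i ≤ k) :
    ((univ : Finset (Fin (2*k+(2*k+1)))).filter
      (fun e : Fin (2*k+(2*k+1)) => ¬ isEast (2*k) (2*k+1) (e : ℕ) ∧ w k i e = 2)).card = k := by
  rw [card_filter_univ k _ (fun j => ¬(j % 2 = 0 ∧ j < 4*k) ∧ wcond k i j)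
      (fun e => by rw [isEast_iff, w_eq_two_iff]),
    pipe k 1 _ 0 0 0 0 0 i (i+k+1) (2*k) (by omega) (by omega) (by omega) (by omega) (by omega) (by omega)
    (by intro a ha; simp only [wcond]; omega) (by intro a ha; simp only [wcond]; omega)]
  split_ifs with h <;> simp only [wcond, or_true, true_or, and_true, true_and] at h <;> omega

lemma wtN_univ_w (k i : ℕ) (hik : i ≤ k) :
    wt (2*k) (2*k+1) (w k i) (northOf (2*k) (2*k+1) (univ : Finset (Fin (2*k+(2*k+1))))) = 2*k := by
  unfold northOf
  rw [wt_filter k _ _ (fun j => ¬(j % 2 = 0 ∧ j < 4*k)) (fun e => by rw [isEast_iff]),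
    wt_w_sum,
    pipe k 2 _ 0 0 0 0 0 i (i+k+1) (2*k) (by omega) (by omega) (by omega) (by omega) (by omega) (by omega)
    (by intro a ha; simp only [wcond]; omega) (by intro a ha; simp only [wcond]; omega)]
  split_ifs with h <;> simp only [wcond, or_true, true_or, and_true, true_and] at h <;> omega

lemma wtE_univ_w (k i : ℕ) (hik : i ≤ k) :
    wt (2*k) (2*k+1) (w k i) (eastOf (2*k) (2*k+1) (univ : Finset (Fin (2*k+(2*k+1))))) = 2*k := by
  unfold eastOf
  rw [wt_filter k _ _ (fun j => (j % 2 = 0 ∧ j < 4*k)) (fun e => by rw [isEast_iff]),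
    wt_w_sum,
    pipe k 2 _ i (i+k) (i+k) (i+k) 0 0 0 0 (by omega) (by omega) (by omega) (by omega) (by omega) (by omega)
    (by intro a ha; simp only [wcond]; omega) (by intro a ha; simp only [wcond]; omega)]
  rw [if_neg (by simp only [wcond, or_true, true_or, and_true, true_and]; omega)]
  omega

lemma mem_arc_iff (k : ℕ) (u v e : Fin (2*k+(2*k+1))) :
    e ∈ arc (2*k) (2*k+1) u v ↔ amem u.val v.val e.val := by
  rw [arc_eq]
  simp

lemma fin_ne_of_val_ne {n : ℕ} {a b : Fin n} (h : a.val ≠ b.val) : a ≠ b := by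
  intro hh
  rw [Fin.ext_iff] at hh
  exact h hh

lemma northOf_arc (k : ℕ) (u v : Fin (2*k+(2*k+1))) :
    northOf (2*k) (2*k+1) (arc (2*k) (2*k+1) u v)
      = univ.filter (fun e => amem u.val v.val e.val ∧ ¬(e.val % 2 = 0 ∧ e.val < 4*k)) := by
  unfold northOf
  rw [arc_eq, Finset.filter_filter]
  apply Finset.filter_congr
  intro e _
  simp only [isEast_iff]

lemma eastOf_arc (k : ℕ) (u v : Fin (2*k+(2*k+1))) :
    eastOf (2*k) (2*k+1) (arc (2*k) (2*k+1) u v)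
      = univ.filter (fun e => amem u.val v.val e.val ∧ (e.val % 2 = 0 ∧ e.val < 4*k)) := by
  unfold eastOf
  rw [arc_eq, Finset.filter_filter]
  apply Finset.filter_congr
  intro e _
  simp only [isEast_iff]

/-- number of norths of an arc, via interval data for odd indices -/
lemma cardN_arc_eq (k : ℕ) (u v : Fin (2*k+(2*k+1))) (l h l' h' tl : ℕ)
    (hd : h ≤ l') (hm : h ≤ 2*k) (hm' : h' ≤ 2*k)
    (H : ∀ x, x < 2*k → (amem u.val v.val (2*x+1) ↔ ((l ≤ x ∧ x < h) ∨ (l' ≤ x ∧ x < h'))))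
    (Ht : (if amem u.val v.val (4*k) then (1:ℕ) else 0) = tl) :
    (northOf (2*k) (2*k+1) (arc (2*k) (2*k+1) u v)).card = (h - l) + ((h' - l') + tl) := by
  rw [northOf_arc, card_filter_univ k _
      (fun j => amem u.val v.val j ∧ ¬(j % 2 = 0 ∧ j < 4*k)) (fun e => Iff.rfl),
    pipe k 1 _ 0 0 0 0 l h l' h' (by omega) hd (by omega) (by omega) hm hm'
      (by intro x hx; simp only [amem]; omega)
      (by intro x hx; have := H x hx; simp only [amem] at this ⊢; omega)]
  have h4 : (if amem u.val v.val (4*k) ∧ ¬(4*k % 2 = 0 ∧ 4*k < 4*k) then (1:ℕ) else 0)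
      = (if amem u.val v.val (4*k) then (1:ℕ) else 0) :=
    if_congr (and_iff_left (by omega)) rfl rfl
  rw [h4, Ht]
  omega

/-- number of easts of an arc, via interval data for even indices -/
lemma cardE_arc_eq (k : ℕ) (u v : Fin (2*k+(2*k+1))) (l h l' h' : ℕ)
    (hd : h ≤ l') (hm : h ≤ 2*k) (hm' : h' ≤ 2*k)
    (H : ∀ x, x < 2*k → (amem u.val v.val (2*x) ↔ ((l ≤ x ∧ x < h) ∨ (l' ≤ x ∧ x < h')))) :
    (eastOf (2*k) (2*k+1) (arc (2*k) (2*k+1) u v)).card = (h - l) + (h' - l') := by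
  rw [eastOf_arc, card_filter_univ k _
      (fun j => amem u.val v.val j ∧ (j % 2 = 0 ∧ j < 4*k)) (fun e => Iff.rfl),
    pipe k 1 _ l h l' h' 0 0 0 0 hd (by omega) hm hm' (by omega) (by omega)
      (by intro x hx; have := H x hx; simp only [amem] at this ⊢; omega)
      (by intro x hx; simp only [amem]; omega)]
  rw [if_neg (by omega)]
  omega

/-- weight of the east edges of an arc under `w k i` -/
lemma wtE_arc_eq (k i : ℕ) (u v : Fin (2*k+(2*k+1))) (l h l' h' : ℕ)
    (hd : h ≤ l') (hm : h ≤ 2*k) (hm' : h' ≤ 2*k)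
    (H : ∀ x, x < 2*k → ((amem u.val v.val (2*x) ∧ wcond k i (2*x))
        ↔ ((l ≤ x ∧ x < h) ∨ (l' ≤ x ∧ x < h')))) :
    wt (2*k) (2*k+1) (w k i) (eastOf (2*k) (2*k+1) (arc (2*k) (2*k+1) u v))
      = ((h - l) + (h' - l')) * 2 := by
  rw [eastOf_arc, wt_filter k _ _
      (fun j => amem u.val v.val j ∧ (j % 2 = 0 ∧ j < 4*k)) (fun e => Iff.rfl),
    wt_w_sum,
    pipe k 2 _ l h l' h' 0 0 0 0 hd (by omega) hm hm' (by omega) (by omega)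
      (by intro x hx; have := H x hx; simp only [amem, wcond] at this ⊢; omega)
      (by intro x hx; simp only [amem]; omega)]
  rw [if_neg (by omega)]
  omega

/-- weight of the north edges of an arc under `w k i` -/
lemma wtN_arc_eq (k i : ℕ) (u v : Fin (2*k+(2*k+1))) (l h l' h' tl : ℕ)
    (hd : h ≤ l') (hm : h ≤ 2*k) (hm' : h' ≤ 2*k)
    (H : ∀ x, x < 2*k → ((amem u.val v.val (2*x+1) ∧ wcond k i (2*x+1))
        ↔ ((l ≤ x ∧ x < h) ∨ (l' ≤ x ∧ x < h'))))
    (Ht : (if amem u.val v.val (4*k) ∧ wcond k i (4*k) then (2:ℕ) else 0) = tl) :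
    wt (2*k) (2*k+1) (w k i) (northOf (2*k) (2*k+1) (arc (2*k) (2*k+1) u v))
      = ((h - l) + (h' - l')) * 2 + tl := by
  rw [northOf_arc, wt_filter k _ _
      (fun j => amem u.val v.val j ∧ ¬(j % 2 = 0 ∧ j < 4*k)) (fun e => Iff.rfl),
    wt_w_sum,
    pipe k 2 _ 0 0 0 0 l h l' h' (by omega) hd (by omega) (by omega) hm hm'
      (by intro x hx; simp only [amem, wcond]; omega)
      (by intro x hx; have := H x hx; simp only [amem, wcond] at this ⊢; omega)]
  have h4 : (if (amem u.val v.val (4*k) ∧ ¬(4*k % 2 = 0 ∧ 4*k < 4*k)) ∧ wcond k i (4*k)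
        then (2:ℕ) else 0)
      = (if amem u.val v.val (4*k) ∧ wcond k i (4*k) then (2:ℕ) else 0) :=
    if_congr (and_congr_left (fun _ => and_iff_left (by omega))) rfl rfl
  rw [h4, Ht]
  omega

lemma type1_core (k i : ℕ) (hik : i ≤ k) (u e : Fin (2*k+(2*k+1)))
    (hu : u.val % 2 = 0) (h1 : 4*i ≤ u.val) (h2 : u.val < 2*i+2*k)
    (he : e.val = 4*i+4*k-u.val-1) :
    (northOf (2*k) (2*k+1) (arc (2*k) (2*k+1) u e)).card
      = wt (2*k) (2*k+1) (w k i) (eastOf (2*k) (2*k+1) (arc (2*k) (2*k+1) u e)) := by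
  rw [cardN_arc_eq k u e 0 0 (u.val/2) (2*i+2*k-u.val/2) 0 (by omega) (by omega) (by omega)
      (by intro x hx; simp only [amem]; omega)
      (by rw [if_neg (by simp only [amem]; omega)]),
    wtE_arc_eq k i u e 0 0 (u.val/2) (i+k) (by omega) (by omega) (by omega)
      (by intro x hx; simp only [amem, wcond]; omega)]
  omega

theorem compat_w (k i : ℕ) (hik : i ≤ k) : Compatible (2*k) (2*k+1) (w k i) := by
  intro u v hu hv hwu hwv
  rw [isEast_iff] at hu hv
  have hcu : wcond k i u.val := by
    by_contra hc
    exact hwu (by simp only [w]; rw [if_neg hc])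
  have hcv : wcond k i v.val := by
    by_contra hc
    exact hwv (by simp only [w]; rw [if_neg hc])
  have hu4 := u.isLt
  have hv4 := v.isLt
  obtain ⟨hue, hult⟩ := hu
  have hau : i ≤ u.val/2 ∧ u.val/2 < i+k := by
    simp only [wcond] at hcu
    omega
  have hbv : v.val/2 < i ∨ i+k < v.val/2 := by
    simp only [wcond] at hcv
    omega
  have hvp : v.val % 2 = 1 ∨ v.val = 4*k := by omega
  by_cases hb1 : v.val/2 < i
  · -- b < i : wrapped arcs
    by_cases hA : 4*i ≤ u.val
    · -- case (i): type1, north witness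
      refine ⟨⟨4*i+4*k-u.val-1, by omega⟩, ?_, Or.inl ⟨?_, ?_, ?_⟩⟩
      · rw [mem_arc_iff]
        simp only [amem, Fin.val_mk]
        omega
      · rw [isEast_iff]
        simp only [Fin.val_mk]
        omega
      · exact fin_ne_of_val_ne (by simp only [Fin.val_mk]; omega)
      · exact type1_core k i hik u _ hue hA (by omega) rfl
    · by_cases hA2 : u.val = 4*i-2
      · -- case (iv): type1, north witness 4k
        have hi1 : 1 ≤ i := by omega
        refine ⟨⟨4*k, by omega⟩, ?_, Or.inl ⟨?_, ?_, ?_⟩⟩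
        · rw [mem_arc_iff]
          simp only [amem, Fin.val_mk]
          omega
        · rw [isEast_iff]
          simp only [Fin.val_mk]
          omega
        · exact fin_ne_of_val_ne (by simp only [Fin.val_mk]; omega)
        · rw [cardN_arc_eq k u _ 0 0 (u.val/2) (2*k) 1 (by omega) (by omega) (by omega)
              (by intro x hx; simp only [amem, Fin.val_mk]; omega)
              (by rw [if_pos (by simp only [amem, Fin.val_mk]; omega)]),
            wtE_arc_eq k i u _ 0 0 (u.val/2) (i+k) (by omega) (by omega) (by omega)
              (by intro x hx; simp only [amem, wcond, Fin.val_mk]; omega)]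
          omega
      · by_cases hA3 : 4*i ≤ u.val + 2*(v.val/2) + 2
        · -- case (v): type1, wrapped witness
          refine ⟨⟨4*i-u.val-3, by omega⟩, ?_, Or.inl ⟨?_, ?_, ?_⟩⟩
          · rw [mem_arc_iff]
            simp only [amem, Fin.val_mk]
            omega
          · rw [isEast_iff]
            simp only [Fin.val_mk]
            omega
          · exact fin_ne_of_val_ne (by simp only [Fin.val_mk]; omega)
          · rw [cardN_arc_eq k u _ 0 (2*i-u.val/2-1) (u.val/2) (2*k) 1
                (by omega) (by omega) (by omega)
                (by intro x hx; simp only [amem, Fin.val_mk]; omega)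
                (by rw [if_pos (by simp only [amem, Fin.val_mk]; omega)]),
              wtE_arc_eq k i u _ 0 0 (u.val/2) (i+k) (by omega) (by omega) (by omega)
                (by intro x hx; simp only [amem, wcond, Fin.val_mk]; omega)]
            omega
        · -- case (vi): type2, east witness, wrapped target arc
          refine ⟨⟨4*i-2*(v.val/2)-2, by omega⟩, ?_, Or.inr ⟨?_, ?_, ?_⟩⟩
          · rw [mem_arc_iff]
            simp only [amem, Fin.val_mk]
            omega
          · rw [isEast_iff]
            simp only [Fin.val_mk]
            omega
          · exact fin_ne_of_val_ne (by simp only [Fin.val_mk]; omega)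
          · rcases Nat.lt_or_ge i k with hik' | hik'
            · rw [cardE_arc_eq k _ v 0 (v.val/2+1) (2*i-(v.val/2)-1) (2*k)
                  (by omega) (by omega) (by omega)
                  (by intro x hx; simp only [amem, Fin.val_mk]; omega),
                wtN_arc_eq k i _ v 0 (v.val/2+1) (i+k+1) (2*k) 2
                  (by omega) (by omega) (by omega)
                  (by intro x hx; simp only [amem, wcond, Fin.val_mk]; omega)
                  (by rw [if_pos ⟨by simp only [amem, Fin.val_mk]; omega, by simp only [wcond, or_true, true_or, and_true, true_and]; omega⟩])]
              omega
            · rw [cardE_arc_eq k _ v 0 (v.val/2+1) (2*i-(v.val/2)-1) (2*k)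
                  (by omega) (by omega) (by omega)
                  (by intro x hx; simp only [amem, Fin.val_mk]; omega),
                wtN_arc_eq k i _ v 0 (v.val/2+1) (i+k+1) (2*k) 0
                  (by omega) (by omega) (by omega)
                  (by intro x hx; simp only [amem, wcond, Fin.val_mk]; omega)
                  (by rw [if_neg (by rintro ⟨-, hw⟩; simp only [wcond, or_true, true_or, and_true, true_and] at hw; omega)])]
              omega
  · -- b ≥ i, hence b > i+k
    have hb2 : i+k < v.val/2 := by omega
    by_cases hvk : v.val = 4*k
    · by_cases hA : 4*i ≤ u.val
      · -- case (ii): type1 witness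
        refine ⟨⟨4*i+4*k-u.val-1, by omega⟩, ?_, Or.inl ⟨?_, ?_, ?_⟩⟩
        · rw [mem_arc_iff]
          simp only [amem, Fin.val_mk]
          omega
        · rw [isEast_iff]
          simp only [Fin.val_mk]
          omega
        · exact fin_ne_of_val_ne (by simp only [Fin.val_mk]; omega)
        · exact type1_core k i hik u _ hue hA (by omega) rfl
      · -- case (viii): type2, east witness 4i
        refine ⟨⟨4*i, by omega⟩, ?_, Or.inr ⟨?_, ?_, ?_⟩⟩
        · rw [mem_arc_iff]
          simp only [amem, Fin.val_mk]
          omega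
        · rw [isEast_iff]
          simp only [Fin.val_mk]
          omega
        · exact fin_ne_of_val_ne (by simp only [Fin.val_mk]; omega)
        · rw [cardE_arc_eq k _ v 0 0 (2*i) (2*k) (by omega) (by omega) (by omega)
              (by intro x hx; simp only [amem, Fin.val_mk]; omega),
            wtN_arc_eq k i _ v 0 0 (i+k+1) (2*k) 2 (by omega) (by omega) (by omega)
              (by intro x hx; simp only [amem, wcond, Fin.val_mk]; omega)
              (by rw [if_pos ⟨by simp only [amem, Fin.val_mk]; omega, by simp only [wcond, or_true, true_or, and_true, true_and]; omega⟩])]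
          omega
    · have hvodd : v.val % 2 = 1 := by omega
      by_cases hA : 4*i+4*k+1 ≤ u.val + v.val
      · -- case (iii): type1 witness
        refine ⟨⟨4*i+4*k-u.val-1, by omega⟩, ?_, Or.inl ⟨?_, ?_, ?_⟩⟩
        · rw [mem_arc_iff]
          simp only [amem, Fin.val_mk]
          omega
        · rw [isEast_iff]
          simp only [Fin.val_mk]
          omega
        · exact fin_ne_of_val_ne (by simp only [Fin.val_mk]; omega)
        · exact type1_core k i hik u _ hue (by omega) (by omega) rfl
      · -- case (vii): type2 witness
        refine ⟨⟨4*i+4*k+2-2*(v.val/2), by omega⟩, ?_, Or.inr ⟨?_, ?_, ?_⟩⟩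
        · rw [mem_arc_iff]
          simp only [amem, Fin.val_mk]
          omega
        · rw [isEast_iff]
          simp only [Fin.val_mk]
          omega
        · exact fin_ne_of_val_ne (by simp only [Fin.val_mk]; omega)
        · rw [cardE_arc_eq k _ v 0 0 (2*i+2*k+1-v.val/2) (v.val/2+1)
              (by omega) (by omega) (by omega)
              (by intro x hx; simp only [amem, Fin.val_mk]; omega),
            wtN_arc_eq k i _ v 0 0 (i+k+1) (v.val/2+1) 0 (by omega) (by omega) (by omega)
              (by intro x hx; simp only [amem, wcond, Fin.val_mk]; omega)
              (by rw [if_neg (by rintro ⟨ha, -⟩; simp only [amem, Fin.val_mk] at ha; omega)])]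
          omega

theorem shadow_w (k i : ℕ) (hik : i ≤ k) :
    (univ.filter fun e : Fin (2*k+(2*k+1)) =>
        ¬ isEast (2*k) (2*k+1) (e : ℕ) ∧ w k i e ≠ 0) ⊆
      (eastOf (2*k) (2*k+1) Finset.univ).sup (fun u => shEast (2*k) (2*k+1) (w k i) u) := by
  intro e he
  rw [mem_filter] at he
  obtain ⟨-, hN, hne⟩ := he
  have hcond : wcond k i e.val := by
    by_contra hc
    exact hne (by simp only [w]; rw [if_neg hc])
  rw [isEast_iff] at hN
  have he4 := e.isLt
  have hk : 1 ≤ k := by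
    by_contra hk0
    simp only [wcond] at hcond
    omega
  rw [Finset.mem_sup]
  by_cases hik' : i < k
  · -- use u₀ = E_{i+k}; its shadow is all of P_N
    refine ⟨⟨2*i+2*k, by omega⟩, ?_, ?_⟩
    · unfold eastOf
      rw [mem_filter, isEast_iff]
      exact ⟨mem_univ _, by simp only [Fin.val_mk]; omega⟩
    · have hS : ¬ (Finset.univ.filter fun v : Fin (2*k+(2*k+1)) =>
          ¬ isEast (2*k) (2*k+1) (v : ℕ) ∧
            (northOf (2*k) (2*k+1) (arc (2*k) (2*k+1) ⟨2*i+2*k, by omega⟩ v)).card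
              = wt (2*k) (2*k+1) (w k i)
                  (eastOf (2*k) (2*k+1) (arc (2*k) (2*k+1) ⟨2*i+2*k, by omega⟩ v))).Nonempty := by
        rintro ⟨v, hv⟩
        rw [mem_filter, isEast_iff] at hv
        obtain ⟨-, hvN, hEQ⟩ := hv
        have hv4 := v.isLt
        have hvp : v.val % 2 = 1 ∨ v.val = 4*k := by omega
        rcases hvp with hvp | hvp
        · by_cases hcmp : 2*i+2*k ≤ v.val
          · rw [cardN_arc_eq k _ v 0 0 (i+k) (v.val/2+1) 0 (by omega) (by omega) (by omega)
                (by intro x hx; simp only [amem, Fin.val_mk]; omega)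
                (by rw [if_neg (by simp only [amem, Fin.val_mk]; omega)]),
              wtE_arc_eq k i _ v 0 0 0 0 (by omega) (by omega) (by omega)
                (by intro x hx; simp only [amem, wcond, Fin.val_mk]; omega)] at hEQ
            omega
          · rw [cardN_arc_eq k _ v 0 (v.val/2+1) (i+k) (2*k) 1 (by omega) (by omega) (by omega)
                (by intro x hx; simp only [amem, Fin.val_mk]; omega)
                (by rw [if_pos (by simp only [amem, Fin.val_mk]; omega)]),
              wtE_arc_eq k i _ v 0 0 i (v.val/2+1) (by omega) (by omega) (by omega)
                (by intro x hx; simp only [amem, wcond, Fin.val_mk]; omega)] at hEQ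
            omega
        · rw [cardN_arc_eq k _ v 0 0 (i+k) (2*k) 1 (by omega) (by omega) (by omega)
              (by intro x hx; simp only [amem, Fin.val_mk]; omega)
              (by rw [if_pos (by simp only [amem, Fin.val_mk]; omega)]),
            wtE_arc_eq k i _ v 0 0 0 0 (by omega) (by omega) (by omega)
              (by intro x hx; simp only [amem, wcond, Fin.val_mk]; omega)] at hEQ
          omega
      unfold shEast
      rw [dif_neg hS]
      unfold northOf
      rw [mem_filter, isEast_iff]
      exact ⟨mem_univ _, by omega⟩
  · -- i = k: use u₀ = E_0, whose shadow is the norths of [0, 4k-1]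
    have hik2 : i = k := by omega
    subst hik2
    refine ⟨⟨0, by omega⟩, ?_, ?_⟩
    · unfold eastOf
      rw [mem_filter, isEast_iff]
      refine ⟨mem_univ _, ?_⟩
      show (0:ℕ) % 2 = 0 ∧ (0:ℕ) < 4*i
      omega
    · have hchar : ∀ v : Fin (2*i+(2*i+1)),
          (¬ isEast (2*i) (2*i+1) (v : ℕ) ∧
            (northOf (2*i) (2*i+1) (arc (2*i) (2*i+1) ⟨0, by omega⟩ v)).card
              = wt (2*i) (2*i+1) (w i i)
                  (eastOf (2*i) (2*i+1) (arc (2*i) (2*i+1) ⟨0, by omega⟩ v)))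
            ↔ v.val = 4*i-1 := by
        intro v
        have hv4 := v.isLt
        rw [isEast_iff]
        constructor
        · rintro ⟨hvN, hEQ⟩
          have hvp : v.val % 2 = 1 ∨ v.val = 4*i := by omega
          rcases hvp with hvp | hvp
          · rw [cardN_arc_eq i _ v 0 0 0 (v.val/2+1) 0 (by omega) (by omega) (by omega)
                (by intro x hx; simp only [amem, Fin.val_mk]; omega)
                (by rw [if_neg (by simp only [amem, Fin.val_mk]; omega)]),
              wtE_arc_eq i i _ v 0 0 i (v.val/2+1) (by omega) (by omega) (by omega)
                (by intro x hx; simp only [amem, wcond, Fin.val_mk]; omega)] at hEQ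
            omega
          · rw [cardN_arc_eq i _ v 0 0 0 (2*i) 1 (by omega) (by omega) (by omega)
                (by intro x hx; simp only [amem, Fin.val_mk]; omega)
                (by rw [if_pos (by simp only [amem, Fin.val_mk]; omega)]),
              wtE_arc_eq i i _ v 0 0 i (2*i) (by omega) (by omega) (by omega)
                (by intro x hx; simp only [amem, wcond, Fin.val_mk]; omega)] at hEQ
            omega
        · intro hv
          refine ⟨by omega, ?_⟩
          rw [cardN_arc_eq i _ v 0 0 0 (v.val/2+1) 0 (by omega) (by omega) (by omega)
              (by intro x hx; simp only [amem, Fin.val_mk]; omega)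
              (by rw [if_neg (by simp only [amem, Fin.val_mk]; omega)]),
            wtE_arc_eq i i _ v 0 0 i (v.val/2+1) (by omega) (by omega) (by omega)
              (by intro x hx; simp only [amem, wcond, Fin.val_mk]; omega)]
          omega
      have hSne : (Finset.univ.filter fun v : Fin (2*i+(2*i+1)) =>
          ¬ isEast (2*i) (2*i+1) (v : ℕ) ∧
            (northOf (2*i) (2*i+1) (arc (2*i) (2*i+1) ⟨0, by omega⟩ v)).card
              = wt (2*i) (2*i+1) (w i i)
                  (eastOf (2*i) (2*i+1) (arc (2*i) (2*i+1) ⟨0, by omega⟩ v))).Nonempty := by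
        refine ⟨⟨4*i-1, by omega⟩, ?_⟩
        rw [mem_filter]
        exact ⟨mem_univ _, (hchar _).mpr (by simp only [Fin.val_mk])⟩
      unfold shEast
      rw [dif_pos hSne]
      have hc1 := (Classical.choose_spec (Finset.exists_min_image _
        (fun v => (arc (2*i) (2*i+1) ⟨0, by omega⟩ v).card) hSne)).1
      rw [mem_filter] at hc1
      have hcval := (hchar _).mp hc1.2
      rw [northOf_arc, mem_filter]
      refine ⟨mem_univ _, ?_, by omega⟩
      simp only [amem, Fin.val_mk]
      simp only [wcond] at hcond
      omega

theorem tight_w (k i : ℕ) (hik : i ≤ k) : Tight (2*k) (2*k+1) (w k i) := by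
  refine ⟨⟨compat_w k i hik, Or.inr (shadow_w k i hik)⟩, ?_, ?_, ?_⟩
  · rw [wtN_univ_w k i hik]
  · rw [wtE_univ_w k i hik]
    omega
  · left
    rw [wtN_univ_w k i hik, wtE_univ_w k i hik, Nat.gcd_self]
    push_cast
    ring

lemma sum_ite_single (n m : ℕ) (hm : m < n) (f : ℕ → ℕ) (p : ℕ → Prop) [DecidablePred p]
    (h : ∀ j, j < n → (p j ↔ j = m)) :
    ∑ j ∈ range n, (if p j then f j else 0) = f m := by
  have h1 : ∑ j ∈ range n, (if p j then f j else 0)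
      = ∑ j ∈ range n, (if j = m then f j else 0) := by
    apply Finset.sum_congr rfl
    intro j hj
    rw [mem_range] at hj
    exact if_congr (h j hj) rfl rfl
  rw [h1, Finset.sum_ite_eq' (range n) m f, if_pos (mem_range.mpr hm)]

lemma cardN_arc_single (k : ℕ) (u v : Fin (2*k+(2*k+1))) (m : ℕ) (hm : m < 2*k+(2*k+1))
    (h : ∀ j, j < 2*k+(2*k+1) →
      ((amem u.val v.val j ∧ ¬(j % 2 = 0 ∧ j < 4*k)) ↔ j = m)) :
    (northOf (2*k) (2*k+1) (arc (2*k) (2*k+1) u v)).card = 1 := by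
  rw [northOf_arc, card_filter_univ k _
      (fun j => amem u.val v.val j ∧ ¬(j % 2 = 0 ∧ j < 4*k)) (fun e => Iff.rfl),
    sum_ite_single _ m hm _ _ h]

lemma cardE_arc_single (k : ℕ) (u v : Fin (2*k+(2*k+1))) (m : ℕ) (hm : m < 2*k+(2*k+1))
    (h : ∀ j, j < 2*k+(2*k+1) →
      ((amem u.val v.val j ∧ (j % 2 = 0 ∧ j < 4*k)) ↔ j = m)) :
    (eastOf (2*k) (2*k+1) (arc (2*k) (2*k+1) u v)).card = 1 := by
  rw [eastOf_arc, card_filter_univ k _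
      (fun j => amem u.val v.val j ∧ (j % 2 = 0 ∧ j < 4*k)) (fun e => Iff.rfl),
    sum_ite_single _ m hm _ _ h]

lemma wtE_arc_single (k : ℕ) (ω : Fin (2*k+(2*k+1)) → ℕ) (u v : Fin (2*k+(2*k+1)))
    (m : ℕ) (hm : m < 2*k+(2*k+1))
    (h : ∀ j, j < 2*k+(2*k+1) →
      ((amem u.val v.val j ∧ (j % 2 = 0 ∧ j < 4*k)) ↔ j = m)) :
    wt (2*k) (2*k+1) ω (eastOf (2*k) (2*k+1) (arc (2*k) (2*k+1) u v)) = wnat k ω m := by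
  rw [eastOf_arc, wt_filter k ω _
      (fun j => amem u.val v.val j ∧ (j % 2 = 0 ∧ j < 4*k)) (fun e => Iff.rfl),
    sum_ite_single _ m hm _ _ h]

lemma wtN_arc_single (k : ℕ) (ω : Fin (2*k+(2*k+1)) → ℕ) (u v : Fin (2*k+(2*k+1)))
    (m : ℕ) (hm : m < 2*k+(2*k+1))
    (h : ∀ j, j < 2*k+(2*k+1) →
      ((amem u.val v.val j ∧ ¬(j % 2 = 0 ∧ j < 4*k)) ↔ j = m)) :
    wt (2*k) (2*k+1) ω (northOf (2*k) (2*k+1) (arc (2*k) (2*k+1) u v)) = wnat k ω m := by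
  rw [northOf_arc, wt_filter k ω _
      (fun j => amem u.val v.val j ∧ ¬(j % 2 = 0 ∧ j < 4*k)) (fun e => Iff.rfl),
    sum_ite_single _ m hm _ _ h]

/-- the pair `(E_a, N_a)` is never compatible -/
lemma pair_aa (k : ℕ) (ω : Fin (2*k+(2*k+1)) → ℕ) (hc : Compatible (2*k) (2*k+1) ω)
    (a : ℕ) (ha : a < 2*k) (hA : ω ⟨2*a, by omega⟩ ≠ 0) (hB : ω ⟨2*a+1, by omega⟩ ≠ 0) :
    False := by
  obtain ⟨e, he, hcase⟩ := hc ⟨2*a, by omega⟩ ⟨2*a+1, by omega⟩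
    (by rw [isEast_iff]; simp only [Fin.val_mk]; omega)
    (by rw [isEast_iff]; simp only [Fin.val_mk]; omega) hA hB
  rw [mem_arc_iff] at he
  simp only [amem, Fin.val_mk] at he
  rcases hcase with ⟨hnE, hne, -⟩ | ⟨hE, hne, -⟩
  · rw [isEast_iff] at hnE
    rw [Ne, Fin.ext_iff] at hne
    simp only [Fin.val_mk] at hne
    omega
  · rw [isEast_iff] at hE
    rw [Ne, Fin.ext_iff] at hne
    simp only [Fin.val_mk] at hne
    omega

set_option maxHeartbeats 2000000 in
/-- the pair `(E_a, N_{a+1})` is never compatible when both have grade 2, `a+1 < 2k` -/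
lemma pair_ab1 (k : ℕ) (ω : Fin (2*k+(2*k+1)) → ℕ) (hc : Compatible (2*k) (2*k+1) ω)
    (a : ℕ) (ha : a+1 < 2*k) (hA : ω ⟨2*a, by omega⟩ = 2) (hB : ω ⟨2*a+3, by omega⟩ = 2) :
    False := by
  obtain ⟨e, he, hcase⟩ := hc ⟨2*a, by omega⟩ ⟨2*a+3, by omega⟩
    (by rw [isEast_iff]; simp only [Fin.val_mk]; omega)
    (by rw [isEast_iff]; simp only [Fin.val_mk]; omega) (by omega) (by omega)
  rw [mem_arc_iff] at he
  simp only [amem, Fin.val_mk] at he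
  rcases hcase with ⟨hnE, hne, heq⟩ | ⟨hE, hne, heq⟩
  · rw [isEast_iff] at hnE
    rw [Ne, Fin.ext_iff] at hne
    simp only [Fin.val_mk] at hne
    have hev : e.val = 2*a+1 := by omega
    rw [cardN_arc_single k ⟨2*a, by omega⟩ e (2*a+1) (by omega)
        (by intro j hj; simp only [amem, Fin.val_mk, hev]; omega),
      wtE_arc_single k ω ⟨2*a, by omega⟩ e (2*a) (by omega)
        (by intro j hj; simp only [amem, Fin.val_mk, hev]; omega)] at heq
    have hw : wnat k ω (2*a) = ω ⟨2*a, by omega⟩ := dif_pos (by omega)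
    rw [hw, hA] at heq
    omega
  · rw [isEast_iff] at hE
    rw [Ne, Fin.ext_iff] at hne
    simp only [Fin.val_mk] at hne
    have hev : e.val = 2*a+2 := by omega
    rw [cardE_arc_single k e ⟨2*a+3, by omega⟩ (2*a+2) (by omega)
        (by intro j hj; simp only [amem, Fin.val_mk, hev]; omega),
      wtN_arc_single k ω e ⟨2*a+3, by omega⟩ (2*a+3) (by omega)
        (by intro j hj; simp only [amem, Fin.val_mk, hev]; omega)] at heq
    have hw : wnat k ω (2*a+3) = ω ⟨2*a+3, by omega⟩ := dif_pos (by omega)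
    rw [hw, hB] at heq
    omega

set_option maxHeartbeats 2000000 in
/-- the pair `(E_{2k-1}, N_{2k})` is never compatible when both have grade 2 -/
lemma pair_ab2 (k : ℕ) (ω : Fin (2*k+(2*k+1)) → ℕ) (hc : Compatible (2*k) (2*k+1) ω)
    (hk : 1 ≤ k) (hA : ω ⟨4*k-2, by omega⟩ = 2) (hB : ω ⟨4*k, by omega⟩ = 2) :
    False := by
  obtain ⟨e, he, hcase⟩ := hc ⟨4*k-2, by omega⟩ ⟨4*k, by omega⟩
    (by rw [isEast_iff]; simp only [Fin.val_mk]; omega)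
    (by rw [isEast_iff]; simp only [Fin.val_mk]; omega) (by omega) (by omega)
  rw [mem_arc_iff] at he
  simp only [amem, Fin.val_mk] at he
  rcases hcase with ⟨hnE, hne, heq⟩ | ⟨hE, hne, heq⟩
  · rw [isEast_iff] at hnE
    rw [Ne, Fin.ext_iff] at hne
    simp only [Fin.val_mk] at hne
    have hev : e.val = 4*k-1 := by omega
    rw [cardN_arc_single k ⟨4*k-2, by omega⟩ e (4*k-1) (by omega)
        (by intro j hj; simp only [amem, Fin.val_mk, hev]; omega),
      wtE_arc_single k ω ⟨4*k-2, by omega⟩ e (4*k-2) (by omega)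
        (by intro j hj; simp only [amem, Fin.val_mk, hev]; omega)] at heq
    have hw : wnat k ω (4*k-2) = ω ⟨4*k-2, by omega⟩ := dif_pos (by omega)
    rw [hw, hA] at heq
    omega
  · rw [isEast_iff] at hE
    rw [Ne, Fin.ext_iff] at hne
    simp only [Fin.val_mk] at hne
    omega

lemma wnat_eq (k : ℕ) (ω : Fin (2*k+(2*k+1)) → ℕ) (j : ℕ) (h : j < 2*k+(2*k+1)) :
    wnat k ω j = ω ⟨j, h⟩ := dif_pos h

lemma block_lemma (k : ℕ) (A B : Finset ℕ) (hA : A ⊆ range (2*k)) (hB : B ⊆ range (2*k+1))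
    (hcA : A.card = k) (hcB : B.card = k)
    (h1 : ∀ a ∈ A, a ∉ B) (h2 : ∀ a ∈ A, a+1 ∉ B) :
    ∃ i, i ≤ k ∧ A = Finset.Ico i (i+k) ∧ B = range (2*k+1) \ Finset.Icc i (i+k) := by
  rcases Nat.eq_zero_or_pos k with hk | hk
  · subst hk
    refine ⟨0, le_refl _, ?_, ?_⟩
    · have hAe : A = ∅ := Finset.card_eq_zero.mp hcA
      rw [hAe]
      ext x
      simp
    · have hBe : B = ∅ := Finset.card_eq_zero.mp hcB
      rw [hBe]
      ext x
      simp only [Finset.notMem_empty, Finset.mem_sdiff, mem_range, Finset.mem_Icc, false_iff]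
      omega
  · have hAne : A.Nonempty := Finset.card_pos.mp (by omega)
    have hMA : A.max' hAne ∈ A := A.max'_mem hAne
    have hmA : A.min' hAne ∈ A := A.min'_mem hAne
    set M := A.max' hAne with hM
    set m := A.min' hAne with hm
    have hBsub : B ⊆ range (2*k+1) \ (A ∪ A.image (·+1)) := by
      intro b hb
      rw [Finset.mem_sdiff, Finset.mem_union]
      refine ⟨hB hb, ?_⟩
      rintro (hbA | hbI)
      · exact h1 b hbA hb
      · obtain ⟨a, haA, rfl⟩ := Finset.mem_image.mp hbI
        exact h2 a haA hb
    have hUsub : A ∪ A.image (·+1) ⊆ range (2*k+1) := by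
      intro x hx
      rw [Finset.mem_union] at hx
      rcases hx with hx | hx
      · have := mem_range.mp (hA hx)
        exact mem_range.mpr (by omega)
      · obtain ⟨a, haA, rfl⟩ := Finset.mem_image.mp hx
        have := mem_range.mp (hA haA)
        exact mem_range.mpr (by omega)
    have hDcard : (A.image (·+1) \ A).card ≤ 1 := by
      have h3 := Finset.card_le_card hBsub
      rw [Finset.card_sdiff_of_subset hUsub, Finset.card_range] at h3
      have hU : (A ∪ A.image (·+1)).card = A.card + (A.image (·+1) \ A).card := by
        rw [← Finset.union_sdiff_self_eq_union, Finset.card_union_of_disjoint Finset.disjoint_sdiff]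
      have h4 := Finset.card_le_card hUsub
      rw [Finset.card_range] at h4
      omega
    have hM1D : M+1 ∈ A.image (·+1) \ A := by
      rw [Finset.mem_sdiff, Finset.mem_image]
      exact ⟨⟨M, hMA, rfl⟩, fun hMM => by have := A.le_max' _ hMM; omega⟩
    have hup : ∀ x ∈ A, x < M → x+1 ∈ A := by
      intro x hx hxM
      by_contra hx1
      have hxD : x+1 ∈ A.image (·+1) \ A := by
        rw [Finset.mem_sdiff, Finset.mem_image]
        exact ⟨⟨x, hx, rfl⟩, hx1⟩
      have := Finset.card_le_one.mp hDcard _ hxD _ hM1D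
      omega
    have hIccA : Finset.Icc m M ⊆ A := by
      intro x hx
      rw [Finset.mem_Icc] at hx
      have key : ∀ d, m + d ≤ M → m + d ∈ A := by
        intro d
        induction d with
        | zero => intro _; simpa using hmA
        | succ d ih =>
          intro hd
          have := hup (m+d) (ih (by omega)) (by omega)
          rwa [show m+d+1 = m+(d+1) by omega] at this
      have := key (x - m) (by omega)
      rwa [show m + (x-m) = x by omega] at this
    have hAeq : A = Finset.Icc m M := by
      apply Finset.Subset.antisymm _ hIccA
      intro x hx
      exact Finset.mem_Icc.mpr ⟨A.min'_le x hx, A.le_max' x hx⟩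
    have hmM : m ≤ M := A.min'_le M hMA
    have hcard : M + 1 - m = k := by
      rw [hAeq, Nat.card_Icc] at hcA
      exact hcA
    have hM2k : M < 2*k := mem_range.mp (hA hMA)
    have hU2 : A ∪ A.image (·+1) = Finset.Icc m (m+k) := by
      ext x
      rw [Finset.mem_union, Finset.mem_image, Finset.mem_Icc]
      constructor
      · rintro (h | ⟨a, ha, rfl⟩)
        · rw [hAeq, Finset.mem_Icc] at h
          omega
        · rw [hAeq, Finset.mem_Icc] at ha
          omega
      · intro h
        by_cases hxM : x ≤ M
        · left
          rw [hAeq, Finset.mem_Icc]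
          omega
        · right
          exact ⟨M, hMA, by omega⟩
    refine ⟨m, by omega, ?_, ?_⟩
    · rw [hAeq]
      ext x
      rw [Finset.mem_Icc, Finset.mem_Ico]
      omega
    · apply Finset.eq_of_subset_of_card_le
      · rw [← hU2]
        exact hBsub
      · rw [Finset.card_sdiff_of_subset (by intro x hx; rw [Finset.mem_Icc] at hx; exact mem_range.mpr (by omega)),
          Finset.card_range, Nat.card_Icc]
        omega

theorem classify (k : ℕ) (ω : Fin (2*k+(2*k+1)) → ℕ)
    (hc : Compatible (2*k) (2*k+1) ω)
    (hval : ∀ e, ω e = 0 ∨ ω e = 2)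
    (hcE : (Finset.univ.filter fun e : Fin (2*k+(2*k+1)) =>
        isEast (2*k) (2*k+1) (e : ℕ) ∧ ω e = 2).card = k)
    (hcN : (Finset.univ.filter fun e : Fin (2*k+(2*k+1)) =>
        ¬ isEast (2*k) (2*k+1) (e : ℕ) ∧ ω e = 2).card = k) :
    ∃ i, i ≤ k ∧ ω = w k i := by
  set SA := (Finset.univ.filter fun e : Fin (2*k+(2*k+1)) =>
      isEast (2*k) (2*k+1) (e : ℕ) ∧ ω e = 2) with hSA
  set SB := (Finset.univ.filter fun e : Fin (2*k+(2*k+1)) =>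
      ¬ isEast (2*k) (2*k+1) (e : ℕ) ∧ ω e = 2) with hSB
  set A := SA.image (fun e => e.val/2) with hAdef
  set B := SB.image (fun e => e.val/2) with hBdef
  have hAmem : ∀ a, a ∈ A ↔ (a < 2*k ∧ wnat k ω (2*a) = 2) := by
    intro a
    rw [hAdef, Finset.mem_image]
    constructor
    · rintro ⟨e, he, rfl⟩
      rw [hSA, mem_filter, isEast_iff] at he
      obtain ⟨-, ⟨hpar, hlt⟩, hw2⟩ := he
      refine ⟨by omega, ?_⟩
      rw [show 2*(e.val/2) = e.val by omega, wnat_val]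
      exact hw2
    · rintro ⟨ha, hw2⟩
      refine ⟨⟨2*a, by omega⟩, ?_, by simp only [Fin.val_mk]; omega⟩
      rw [wnat_eq k ω (2*a) (by omega)] at hw2
      exact mem_filter.mpr ⟨mem_univ _,
        by rw [isEast_iff]; simp only [Fin.val_mk]; omega, hw2⟩
  have hBmem : ∀ b, b ∈ B ↔ ((b < 2*k ∧ wnat k ω (2*b+1) = 2) ∨ (b = 2*k ∧ wnat k ω (4*k) = 2)) := by
    intro b
    rw [hBdef, Finset.mem_image]
    constructor
    · rintro ⟨e, he, rfl⟩
      rw [hSB, mem_filter, isEast_iff] at he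
      obtain ⟨-, hnE, hw2⟩ := he
      have he4 := e.isLt
      have hpar : e.val % 2 = 1 ∨ e.val = 4*k := by omega
      rcases hpar with hpar | hpar
      · left
        refine ⟨by omega, ?_⟩
        rw [show 2*(e.val/2)+1 = e.val by omega, wnat_val]
        exact hw2
      · right
        refine ⟨by omega, ?_⟩
        rw [show 4*k = e.val by omega, wnat_val]
        exact hw2
    · rintro (⟨hb, hw2⟩ | ⟨hb, hw2⟩)
      · refine ⟨⟨2*b+1, by omega⟩, ?_, by simp only [Fin.val_mk]; omega⟩
        rw [wnat_eq k ω (2*b+1) (by omega)] at hw2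
        exact mem_filter.mpr ⟨mem_univ _,
          by rw [isEast_iff]; simp only [Fin.val_mk]; omega, hw2⟩
      · refine ⟨⟨4*k, by omega⟩, ?_, by simp only [Fin.val_mk]; omega⟩
        rw [wnat_eq k ω (4*k) (by omega)] at hw2
        exact mem_filter.mpr ⟨mem_univ _,
          by rw [isEast_iff]; simp only [Fin.val_mk]; omega, hw2⟩
  have hcardA : A.card = k := by
    rw [hAdef, Finset.card_image_of_injOn, hcE]
    intro e he e' he' hee
    rw [Finset.mem_coe, mem_filter, isEast_iff] at he he'
    apply Fin.ext
    simp only at hee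
    omega
  have hcardB : B.card = k := by
    rw [hBdef, Finset.card_image_of_injOn, hcN]
    intro e he e' he' hee
    rw [Finset.mem_coe, mem_filter, isEast_iff] at he he'
    have h1 := e.isLt
    have h2 := e'.isLt
    apply Fin.ext
    simp only at hee
    omega
  have hsubA : A ⊆ range (2*k) := by
    intro a ha
    rw [hAmem] at ha
    exact mem_range.mpr ha.1
  have hsubB : B ⊆ range (2*k+1) := by
    intro b hb
    rw [hBmem] at hb
    rcases hb with ⟨hb, -⟩ | ⟨hb, -⟩ <;> exact mem_range.mpr (by omega)
  have hd1 : ∀ a ∈ A, a ∉ B := by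
    intro a haA haB
    rw [hAmem] at haA
    rw [hBmem] at haB
    obtain ⟨ha, hwa⟩ := haA
    rcases haB with ⟨-, hwb⟩ | ⟨hb, -⟩
    · refine pair_aa k ω hc a ha ?_ ?_
      · rw [← wnat_eq k ω (2*a) (by omega), hwa]
        omega
      · rw [← wnat_eq k ω (2*a+1) (by omega), hwb]
        omega
    · omega
  have hd2 : ∀ a ∈ A, a+1 ∉ B := by
    intro a haA haB
    rw [hAmem] at haA
    rw [hBmem] at haB
    obtain ⟨ha, hwa⟩ := haA
    rcases haB with ⟨hb, hwb⟩ | ⟨hb, hwb⟩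
    · refine pair_ab1 k ω hc a (by omega) ?_ ?_
      · rw [← wnat_eq k ω (2*a) (by omega), hwa]
      · rw [← wnat_eq k ω (2*a+3) (by omega), show 2*a+3 = 2*(a+1)+1 by omega, hwb]
    · refine pair_ab2 k ω hc (by omega) ?_ ?_
      · rw [← wnat_eq k ω (4*k-2) (by omega), show 4*k-2 = 2*a by omega, hwa]
      · rw [← wnat_eq k ω (4*k) (by omega), hwb]
  obtain ⟨i, hik, hAeq, hBeq⟩ := block_lemma k A B hsubA hsubB hcardA hcardB hd1 hd2
  refine ⟨i, hik, ?_⟩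
  funext e
  have he4 := e.isLt
  rcases hval e with h0 | h2
  · rw [h0]
    simp only [w]
    rw [if_neg]
    intro hw
    simp only [wcond] at hw
    rcases hw with ⟨hpar, hlt, hge, hlt2⟩ | ⟨hpar, hout⟩
    · have hmem : e.val/2 ∈ A := by
        rw [hAeq, Finset.mem_Ico]
        omega
      rw [hAmem] at hmem
      obtain ⟨-, hwa⟩ := hmem
      rw [show 2*(e.val/2) = e.val by omega, wnat_val] at hwa
      omega
    · have hmem : e.val/2 ∈ B := by
        rw [hBeq, Finset.mem_sdiff, Finset.mem_Icc, mem_range]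
        omega
      rw [hBmem] at hmem
      rcases hmem with ⟨hb, hwb⟩ | ⟨hb, hwb⟩
      · rw [show 2*(e.val/2)+1 = e.val by omega, wnat_val] at hwb
        omega
      · rw [show 4*k = e.val by omega, wnat_val] at hwb
        omega
  · rw [h2]
    simp only [w]
    rw [if_pos]
    simp only [wcond]
    by_cases hEe : e.val % 2 = 0 ∧ e.val < 4*k
    · left
      have hmem : e.val/2 ∈ A := by
        rw [hAmem]
        refine ⟨by omega, ?_⟩
        rw [show 2*(e.val/2) = e.val by omega, wnat_val]
        exact h2
      rw [hAeq, Finset.mem_Ico] at hmem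
      omega
    · right
      have hmem : e.val/2 ∈ B := by
        rw [hBmem]
        rcases (show e.val % 2 = 1 ∨ e.val = 4*k by omega) with hp | hp
        · left
          refine ⟨by omega, ?_⟩
          rw [show 2*(e.val/2)+1 = e.val by omega, wnat_val]
          exact h2
        · right
          refine ⟨by omega, ?_⟩
          rw [show 4*k = e.val by omega, wnat_val]
          exact h2
      rw [hBeq, Finset.mem_sdiff, Finset.mem_Icc, mem_range] at hmem
      omega

lemma w_ne (k i j : ℕ) (hij : i < j) (hjk : j ≤ k) : w k i ≠ w k j := by
  intro hEq
  have h1 : w k i ⟨2*i, by omega⟩ = 2 := by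
    simp only [w]
    rw [if_pos]
    simp only [wcond, Fin.val_mk]
    omega
  have h2 : w k j ⟨2*i, by omega⟩ = 0 := by
    simp only [w]
    rw [if_neg]
    intro hw
    simp only [wcond, Fin.val_mk] at hw
    omega
  rw [hEq] at h1
  rw [h1] at h2
  omega

end DG14


open DyckGrading in
/-- (`ℓ₁ = ℓ₂ = 2` case.)  On the maximal Dyck path `P(2k, 2k+1)`, the number of tight
gradings taking value `2` on exactly `k` horizontal edges, value `2` on exactly `k`
vertical edges, and `0` elsewhere equals `k + 1`. -/
theorem stmt14 (k : ℕ) :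
    Nat.card {ω : Fin (2 * k + (2 * k + 1)) → ℕ //
      Tight (2 * k) (2 * k + 1) ω ∧
      (∀ e, ω e = 0 ∨ ω e = 2) ∧
      (Finset.univ.filter fun e : Fin (2 * k + (2 * k + 1)) =>
        isEast (2 * k) (2 * k + 1) (e : ℕ) ∧ ω e = 2).card = k ∧
      (Finset.univ.filter fun e : Fin (2 * k + (2 * k + 1)) =>
        ¬ isEast (2 * k) (2 * k + 1) (e : ℕ) ∧ ω e = 2).card = k} = k + 1 := by
  have hbij : Function.Bijective (fun i : Fin (k+1) =>
      (⟨DG14.w k i.val, DG14.tight_w k i.val (by omega), DG14.w_vals k i.val,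
        DG14.countE_w k i.val (by omega), DG14.countN_w k i.val (by omega)⟩ :
        {ω : Fin (2 * k + (2 * k + 1)) → ℕ //
          Tight (2 * k) (2 * k + 1) ω ∧
          (∀ e, ω e = 0 ∨ ω e = 2) ∧
          (Finset.univ.filter fun e : Fin (2 * k + (2 * k + 1)) =>
            isEast (2 * k) (2 * k + 1) (e : ℕ) ∧ ω e = 2).card = k ∧
          (Finset.univ.filter fun e : Fin (2 * k + (2 * k + 1)) =>
            ¬ isEast (2 * k) (2 * k + 1) (e : ℕ) ∧ ω e = 2).card = k})) := by
    constructor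
    · intro i j hij
      have hw : DG14.w k i.val = DG14.w k j.val := congrArg Subtype.val hij
      have hik : i.val ≤ k := by omega
      have hjk : j.val ≤ k := by omega
      rcases Nat.lt_trichotomy i.val j.val with h | h | h
      · exact absurd hw (DG14.w_ne k i.val j.val h hjk)
      · exact Fin.ext h
      · exact absurd hw.symm (DG14.w_ne k j.val i.val h hik)
    · rintro ⟨ω, hT, hval, hE, hN⟩
      obtain ⟨i, hik, rfl⟩ := DG14.classify k ω hT.1.1 hval hE hN
      exact ⟨⟨i, by omega⟩, rfl⟩
  rw [← Nat.card_eq_of_bijective _ hbij, Nat.card_eq_fintype_card, Fintype.card_fin]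
end

section
/- Fix (d₁,d₂) ∈ ℤ². If d₁ ≤ 0 and d₂ ≤ 0, the greedy coefficients satisfy c(p,q) = 0 for all (p,q) ≠ (0,0). If d₁ ≤ 0 and d₂ ≥ 0, then c(p,q) = 0 unless q = 0, and c(p,0) = π_{d₂,p}(p_{1,•}). If d₁ ≥ 0 and d₂ ≤ 0, then c(p,q) = 0 unless p = 0, and c(0,q) = π_{d₁,q}(p_{2,•}). -/
lemma sigmaP_nonpos {i : Fin 2} {m : ℤ} (hm : m ≤ 0) {k : ℕ} (hk : k ≠ 0) :
    sigmaP i m k = 0 := by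
  unfold sigmaP
  rcases lt_or_eq_of_le hm with h | h
  · rw [if_neg (not_le.2 h), if_neg hk]
  · subst h
    simp [PowerSeries.coeff_one, hk]

lemma tmax_zero_right (f : GreedyRing) (hf : ∀ e, 0 ≤ MvPolynomial.coeff e f) :
    Tmax f 0 = f := by
  unfold Tmax
  rw [MvPolynomial.support_zero, Finset.union_empty]
  rw [Finset.sum_congr rfl (fun e _ => by
    rw [MvPolynomial.coeff_zero, max_eq_left (hf e)])]
  exact MvPolynomial.support_sum_monomial_coeff f

lemma tmax_zero_left (f : GreedyRing) (hf : ∀ e, 0 ≤ MvPolynomial.coeff e f) :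
    Tmax 0 f = f := by
  unfold Tmax
  rw [MvPolynomial.support_zero, Finset.empty_union]
  rw [Finset.sum_congr rfl (fun e _ => by
    rw [MvPolynomial.coeff_zero, max_eq_right (hf e)])]
  exact MvPolynomial.support_sum_monomial_coeff f

lemma tmax_zero_zero : Tmax 0 0 = 0 := tmax_zero_right 0 (by simp)

lemma nn_coeff_pow (i : Fin 2) (j : ℕ) :
    ∀ (n : ℕ) (e : (Fin 2 × ℕ) →₀ ℕ), 0 ≤ MvPolynomial.coeff e (PowerSeries.coeff n ((Pser i) ^ j)) := by
  induction j with
  | zero =>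
    intro n e
    rw [pow_zero, PowerSeries.coeff_one]
    split_ifs <;> simp [MvPolynomial.coeff_one]
    split_ifs <;> norm_num
  | succ j ih =>
    intro n e
    rw [pow_succ, PowerSeries.coeff_mul, MvPolynomial.coeff_sum]
    refine Finset.sum_nonneg fun x _ => ?_
    rw [MvPolynomial.coeff_mul]
    refine Finset.sum_nonneg fun y _ => mul_nonneg (ih _ _) ?_
    show 0 ≤ MvPolynomial.coeff y.2 (PowerSeries.coeff x.2 (Pser i))
    rw [Pser, PowerSeries.coeff_mk]
    split_ifs
    · simp [MvPolynomial.coeff_one]; split_ifs <;> norm_num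
    · rw [MvPolynomial.coeff_X']; split_ifs <;> norm_num

lemma nn_piP (i : Fin 2) (m : ℤ) (n : ℕ) :
    ∀ e, 0 ≤ MvPolynomial.coeff e (piP i m n) := by
  intro e
  unfold piP
  split_ifs with h1 h2
  · exact nn_coeff_pow i m.toNat n e
  · simp [MvPolynomial.coeff_one]; split_ifs <;> norm_num
  · simp

lemma conv (i : Fin 2) (m : ℤ) (hm : 0 ≤ m) (p : ℕ) (hp : p ≠ 0) :
    piP i m p = ∑ k ∈ Finset.Icc 1 p, -(piP i m (p - k) * sigmaP i m k) := by
  set F := (Pser i) ^ m.toNat with hF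
  set G := (PowerSeries.invOfUnit (Pser i) 1) ^ m.toNat with hG
  have hmul : Pser i * PowerSeries.invOfUnit (Pser i) 1 = 1 :=
    PowerSeries.mul_invOfUnit _ _ (by rw [constCoeff_Pser]; rfl)
  have key : F * G = 1 := by rw [hF, hG, ← mul_pow, hmul, one_pow]
  have h0 : PowerSeries.coeff p (F * G) = 0 := by
    rw [key, PowerSeries.coeff_one, if_neg hp]
  rw [PowerSeries.coeff_mul] at h0
  have hswap : ∑ x ∈ Finset.HasAntidiagonal.antidiagonal p,
      PowerSeries.coeff x.1 F * PowerSeries.coeff x.2 G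
      = ∑ x ∈ Finset.HasAntidiagonal.antidiagonal p,
      PowerSeries.coeff x.2 F * PowerSeries.coeff x.1 G := by
    simpa using (Finset.Nat.sum_antidiagonal_swap
      (f := fun x => PowerSeries.coeff x.2 F * PowerSeries.coeff x.1 G))
  rw [hswap, Finset.Nat.sum_antidiagonal_eq_sum_range_succ_mk, Finset.sum_range_succ'] at h0
  have hG0 : PowerSeries.coeff 0 G = 1 := by
    rw [PowerSeries.coeff_zero_eq_constantCoeff, hG, map_pow,
      PowerSeries.constantCoeff_invOfUnit, inv_one, Units.val_one, one_pow]
  rw [Nat.sub_zero, hG0, mul_one] at h0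
  simp only [piP, sigmaP, if_pos hm]
  rw [← Finset.Ico_add_one_right_eq_Icc, Finset.sum_Ico_eq_sum_range]
  have h1 : PowerSeries.coeff p F = -∑ k ∈ Finset.range p,
      PowerSeries.coeff (p - (k+1)) F * PowerSeries.coeff (k+1) G :=
    eq_neg_of_add_eq_zero_right h0
  rw [h1, ← Finset.sum_neg_distrib]
  exact Finset.sum_congr (by norm_num) fun k _ => by rw [add_comm 1 k]

/-- Fix `(d₁,d₂) ∈ ℤ²` and let `c(p,q)` be the greedy coefficients defined by the
T-max recursion.  If `d₁ ≤ 0` and `d₂ ≤ 0` then `c(p,q) = 0` for `(p,q) ≠ (0,0)`;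
if `d₁ ≤ 0 ≤ d₂` then `c(p,q) = 0` unless `q = 0` and `c(p,0) = π_{d₂,p}(p_{1,•})`;
if `d₂ ≤ 0 ≤ d₁` then `c(p,q) = 0` unless `p = 0` and `c(0,q) = π_{d₁,q}(p_{2,•})`. -/
theorem stmt16 (d₁ d₂ : ℤ) (c : ℕ → ℕ → GreedyRing)
    (hc0 : c 0 0 = 1)
    (hc : ∀ p q : ℕ, ¬(p = 0 ∧ q = 0) →
      c p q = Tmax
        (∑ k ∈ Finset.Icc 1 p, -(c (p - k) q * sigmaP 0 (d₂ - q) k))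
        (∑ k ∈ Finset.Icc 1 q, -(c p (q - k) * sigmaP 1 (d₁ - p) k))) :
    (d₁ ≤ 0 → d₂ ≤ 0 → ∀ p q : ℕ, ¬(p = 0 ∧ q = 0) → c p q = 0) ∧
    (d₁ ≤ 0 → 0 ≤ d₂ →
      (∀ p q : ℕ, q ≠ 0 → c p q = 0) ∧ (∀ p : ℕ, c p 0 = piP 0 d₂ p)) ∧
    (0 ≤ d₁ → d₂ ≤ 0 →
      (∀ p q : ℕ, p ≠ 0 → c p q = 0) ∧ (∀ q : ℕ, c 0 q = piP 1 d₁ q)) := by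
  refine ⟨?_, ?_, ?_⟩
  · intro h1 h2 p q hpq
    rw [hc p q hpq]
    have s1 : (∑ k ∈ Finset.Icc 1 p, -(c (p - k) q * sigmaP 0 (d₂ - q) k)) = 0 :=
      Finset.sum_eq_zero fun k hk => by
        have := (Finset.mem_Icc.1 hk).1
        rw [sigmaP_nonpos (by omega) (by omega), mul_zero, neg_zero]
    have s2 : (∑ k ∈ Finset.Icc 1 q, -(c p (q - k) * sigmaP 1 (d₁ - p) k)) = 0 :=
      Finset.sum_eq_zero fun k hk => by
        have := (Finset.mem_Icc.1 hk).1
        rw [sigmaP_nonpos (by omega) (by omega), mul_zero, neg_zero]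
    rw [s1, s2, tmax_zero_zero]
  · intro h1 h2
    have hz : ∀ p q : ℕ, q ≠ 0 → c p q = 0 := by
      intro p
      induction p using Nat.strong_induction_on with
      | _ p ih =>
        intro q hq
        rw [hc p q (by tauto)]
        have s2 : (∑ k ∈ Finset.Icc 1 q, -(c p (q - k) * sigmaP 1 (d₁ - p) k)) = 0 :=
          Finset.sum_eq_zero fun k hk => by
            have := (Finset.mem_Icc.1 hk).1
            rw [sigmaP_nonpos (by omega) (by omega), mul_zero, neg_zero]
        have s1 : (∑ k ∈ Finset.Icc 1 p, -(c (p - k) q * sigmaP 0 (d₂ - q) k)) = 0 :=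
          Finset.sum_eq_zero fun k hk => by
            have h' := Finset.mem_Icc.1 hk
            rw [ih (p - k) (by omega) q hq, zero_mul, neg_zero]
        rw [s1, s2, tmax_zero_zero]
    refine ⟨hz, ?_⟩
    intro p
    induction p using Nat.strong_induction_on with
    | _ p ih =>
      rcases Nat.eq_zero_or_pos p with rfl | hp
      · rw [hc0, piP_zero]
      · rw [hc p 0 (by omega)]
        have s2 : (∑ k ∈ Finset.Icc 1 0, -(c p (0 - k) * sigmaP 1 (d₁ - p) k)) = 0 := by
          simp
        have s1 : (∑ k ∈ Finset.Icc 1 p, -(c (p - k) 0 * sigmaP 0 (d₂ - (0:ℕ)) k))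
            = ∑ k ∈ Finset.Icc 1 p, -(piP 0 d₂ (p - k) * sigmaP 0 d₂ k) :=
          Finset.sum_congr rfl fun k hk => by
            have h' := Finset.mem_Icc.1 hk
            rw [ih (p - k) (by omega)]
            norm_num
        rw [s1, s2, ← conv 0 d₂ h2 p (by omega), tmax_zero_right _ (nn_piP _ _ _)]
  · intro h1 h2
    have hz : ∀ p q : ℕ, p ≠ 0 → c p q = 0 := by
      intro p q hp
      induction q using Nat.strong_induction_on with
      | _ q ih =>
        rw [hc p q (by tauto)]
        have s1 : (∑ k ∈ Finset.Icc 1 p, -(c (p - k) q * sigmaP 0 (d₂ - q) k)) = 0 :=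
          Finset.sum_eq_zero fun k hk => by
            have := (Finset.mem_Icc.1 hk).1
            rw [sigmaP_nonpos (by omega) (by omega), mul_zero, neg_zero]
        have s2 : (∑ k ∈ Finset.Icc 1 q, -(c p (q - k) * sigmaP 1 (d₁ - p) k)) = 0 :=
          Finset.sum_eq_zero fun k hk => by
            have h' := Finset.mem_Icc.1 hk
            rw [ih (q - k) (by omega), zero_mul, neg_zero]
        rw [s1, s2, tmax_zero_zero]
    refine ⟨hz, ?_⟩
    intro q
    induction q using Nat.strong_induction_on with
    | _ q ih =>
      rcases Nat.eq_zero_or_pos q with rfl | hq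
      · rw [hc0, piP_zero]
      · rw [hc 0 q (by omega)]
        have s1 : (∑ k ∈ Finset.Icc 1 0, -(c (0 - k) q * sigmaP 0 (d₂ - q) k)) = 0 := by
          simp
        have s2 : (∑ k ∈ Finset.Icc 1 q, -(c 0 (q - k) * sigmaP 1 (d₁ - (0:ℕ)) k))
            = ∑ k ∈ Finset.Icc 1 q, -(piP 1 d₁ (q - k) * sigmaP 1 d₁ k) :=
          Finset.sum_congr rfl fun k hk => by
            have h' := Finset.mem_Icc.1 hk
            rw [ih (q - k) (by omega)]
            norm_num
        rw [s1, s2, ← conv 1 d₁ h1 q (by omega), tmax_zero_left _ (nn_piP _ _ _)]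
end
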